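/- arXiv:2304.07653 — 10 statements merged into one kernel-verified Lean document; each statement's English description precedes it below -/
import Mathlib

section
/- Let 0 ≤ θL < θH, let fL, fH > 0 with fL + fH = 1, and let λ ∈ [0,1). Define, for q ≥ 0, the seller's profit Π(q) = λ·[fL·θL²/2 + fH·(θH²/2 − (θH−θL)·q)] + (1−λ)·[fL·(θL·q − q²/2) + fH·(θH²/2 − (θH−θL)·q)]. Then Π attains its maximum over [0,∞) at the unique point q* = max{0, θL − (fH/fL)·(θH−θL)·(1/(1−λ))} (note 1/(1−λ) = 1 + λ/(1−λ)). -/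
/-- Single seller, binary values with showrooming. The profit
`Π(q) = λ·[fL·θL²/2 + fH·(θH²/2 − (θH−θL)·q)] + (1−λ)·[fL·(θL·q − q²/2) + fH·(θH²/2 − (θH−θL)·q)]`
attains its maximum over `[0,∞)` at the unique point
`q* = max{0, θL − (fH/fL)·(θH−θL)·(1/(1−λ))}`. -/
theorem stmt_0 (θL θH fL fH lam : ℝ)
    (hθL : 0 ≤ θL) (hθ : θL < θH) (hfL : 0 < fL) (hfH : 0 < fH)
    (hsum : fL + fH = 1) (hlam0 : 0 ≤ lam) (hlam1 : lam < 1)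
    (profit : ℝ → ℝ)
    (hprofit : ∀ q, profit q =
      lam * (fL * θL ^ 2 / 2 + fH * (θH ^ 2 / 2 - (θH - θL) * q))
      + (1 - lam) * (fL * (θL * q - q ^ 2 / 2) + fH * (θH ^ 2 / 2 - (θH - θL) * q)))
    (qstar : ℝ)
    (hqstar : qstar = max 0 (θL - (fH / fL) * (θH - θL) * (1 / (1 - lam)))) :
    (∀ q, 0 ≤ q → profit q ≤ profit qstar) ∧
    (∀ q, 0 ≤ q → profit q = profit qstar → q = qstar) := by
  have h1l : 0 < 1 - lam := by linarith
  set B := (1 - lam) * fL with hB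
  have hBpos : 0 < B := by positivity
  set A := (1 - lam) * fL * θL - fH * (θH - θL) with hA
  have hq0 : θL - (fH / fL) * (θH - θL) * (1 / (1 - lam)) = A / B := by
    rw [hA, hB]; field_simp
  have hdiff : ∀ q q' : ℝ, profit q - profit q'
      = A * (q - q') - B * (q ^ 2 - q' ^ 2) / 2 := by
    intro q q'; rw [hprofit, hprofit, hA, hB]; ring
  rcases le_or_gt 0 (A / B) with h0 | h0
  · have hqs : qstar = A / B := by rw [hqstar, hq0, max_eq_right h0]
    have hAB : A = B * qstar := by rw [hqs]; field_simp
    constructor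
    · intro q hq
      have hd := hdiff q qstar
      nlinarith [sq_nonneg (q - qstar), hBpos]
    · intro q hq heq
      have hd := hdiff q qstar
      have h2 : (q - qstar) ^ 2 = 0 := by nlinarith [sq_nonneg (q - qstar)]
      have := pow_eq_zero_iff (n := 2) (by norm_num) |>.mp h2
      linarith [sub_eq_zero.mp this]
  · have hqs : qstar = 0 := by rw [hqstar, hq0]; exact max_eq_left h0.le
    have hAneg : A < 0 := by
      rcases (div_neg_iff).mp h0 with ⟨_, hb⟩ | ⟨ha, _⟩
      · linarith
      · exact ha
    constructor
    · intro q hq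
      have hd := hdiff q qstar
      rw [hqs] at hd ⊢
      nlinarith [mul_nonneg hq hq, mul_nonpos_of_nonpos_of_nonneg hAneg.le hq]
    · intro q hq heq
      have hd := hdiff q qstar
      rw [hqs] at hd heq
      have hqle : q ≤ 0 := by
        nlinarith [mul_nonpos_of_nonpos_of_nonneg hAneg.le hq, sq_nonneg q]
      linarith [le_antisymm hqle hq]
end

section
/- Let θL < θH, J ≥ 1 a natural number, λ ∈ [0,1), and F, G : [θL, θH] → [0,1] continuously differentiable CDFs with F(θH) = G(θH) = 1, densities f = F′ ≥ 0 and g = G′ > 0 on (θL, θH). Define q̂*(θ) = max{0, θ − (1 − λ·F(θ)^{J} − (1−λ)·G(θ)^{J})/((1−λ)·J·G(θ)^{J−1}·g(θ))}. For a measurable bounded q : [θL, θH] → [0,∞) and u0 ≥ 0, set U(θ) = u0 + ∫_{θL}^{θ} q(x) dx and Π(q, u0) = (1−λ)·∫_{θL}^{θH} [θ·q(θ) − q(θ)²/2 − U(θ)]·G(θ)^{J−1}·g(θ) dθ + λ·∫_{θL}^{θH} [θ²/2 − U(θ)]·F(θ)^{J−1}·f(θ) dθ. Then Π(q, u0) ≤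 Π(q̂*, 0) for all such (q, u0); i.e., the quality schedule q̂* together with zero rent at the bottom maximizes the seller's combined on- and off-platform profit. -/
/-!
Integrating the rent `U θ = u₀ + ∫_{θL}^θ q` by parts against the type densities gives
`∫ U · G^{J-1} g = u₀ (1 - G(θL)^J)/J + ∫ q(θ) (1 - G(θ)^J)/J`, and likewise on the platform.
Hence the profit is `λ ∫ θ²/2 · F^{J-1} f + ∫ Φ(θ, q θ) - u₀ M(θL)/J`, where
`M θ = 1 - λ F(θ)^J - (1-λ) G(θ)^J ≥ 0` and
`Φ(θ, s) = (1-λ)(θ s - s²/2) G^{J-1} g - s M(θ)/J`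
is a concave quadratic in `s` whose maximiser over `s ≥ 0` is `q̂*(θ)`. So `q̂*` maximises the
integrand pointwise, and zero rent at the bottom is optimal because `M(θL) ≥ 0`.
-/

open MeasureTheory Set Filter intervalIntegral
open scoped Interval

theorem IntervalIntegrable.of_norm_le_of_Ioo {E : Type*} [NormedAddCommGroup E] {f : ℝ → E}
    {a b C : ℝ} (hab : a ≤ b) (hf : AEStronglyMeasurable f (volume.restrict (Ioo a b)))
    (hC : ∀ x ∈ Ioo a b, ‖f x‖ ≤ C) : IntervalIntegrable f volume a b := by
  have hIoo : volume.restrict (Ι a b) = volume.restrict (Ioo a b) := by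
    rw [uIoc_of_le hab, Measure.restrict_congr_set Ioo_ae_eq_Ioc]
  refine (intervalIntegrable_const (c := C)).mono_fun' (hIoo ▸ hf) ?_
  rw [hIoo]
  exact ae_restrict_of_forall_mem measurableSet_Ioo hC

theorem intervalIntegrable_and_sq_of_mem_Icc {q : ℝ → ℝ} {a b C : ℝ} (hab : a ≤ b)
    (hm : AEStronglyMeasurable q (volume.restrict (Ioo a b)))
    (hq : ∀ θ ∈ Ioo a b, q θ ∈ Icc 0 C) :
    IntervalIntegrable q volume a b ∧ IntervalIntegrable (fun θ => q θ ^ 2) volume a b := by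
  have hnorm : ∀ θ ∈ Ioo a b, ‖q θ‖ ≤ C := fun θ hθ => by
    rw [Real.norm_of_nonneg (hq θ hθ).1]; exact (hq θ hθ).2
  refine ⟨.of_norm_le_of_Ioo hab hm hnorm,
    .of_norm_le_of_Ioo (C := C ^ 2) hab (hm.pow 2) fun θ hθ => ?_⟩
  rw [norm_pow]
  exact pow_le_pow_left₀ (norm_nonneg _) (hnorm θ hθ) 2

theorem mul_sub_mul_sq_div_two_le_max_zero_div {A B t : ℝ} (hA : 0 < A) (ht : 0 ≤ t) :
    B * t - A * t ^ 2 / 2 ≤ B * max 0 (B / A) - A * max 0 (B / A) ^ 2 / 2 := by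
  rcases le_or_gt B 0 with hB | hB
  · rw [max_eq_left (div_nonpos_of_nonpos_of_nonneg hB hA.le)]
    nlinarith
  · rw [max_eq_right (div_pos hB hA).le]
    have hvertex : B * (B / A) - A * (B / A) ^ 2 / 2 = B ^ 2 / (2 * A) := by
      field_simp
      ring
    rw [hvertex, le_div_iff₀ (by positivity)]
    nlinarith [sq_nonneg (B - A * t)]

theorem strictMonoOn_Icc_of_hasDerivAt_pos {a b : ℝ} {G g : ℝ → ℝ}
    (hG : ∀ θ ∈ Icc a b, HasDerivAt G (g θ) θ) (hg : ∀ θ ∈ Ioo a b, 0 < g θ) :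
    StrictMonoOn G (Icc a b) :=
  strictMonoOn_of_deriv_pos (convex_Icc a b)
    (fun θ hθ => (hG θ hθ).continuousAt.continuousWithinAt) fun θ hθ => by
      rw [interior_Icc] at hθ
      rw [(hG θ (Ioo_subset_Icc_self hθ)).deriv]
      exact hg θ hθ

theorem HasDerivAt.pow_div_natCast {G : ℝ → ℝ} {g x : ℝ} {J : ℕ} (hJ : J ≠ 0)
    (hG : HasDerivAt G g x) : HasDerivAt (fun y => G y ^ J / J) (G x ^ (J - 1) * g) x := by
  refine ((hG.pow J).div_const (J : ℝ)).congr_deriv ?_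
  field_simp

theorem intervalIntegral.integral_primitive_mul_eq {a b : ℝ} {ρ w : ℝ → ℝ}
    (hρ : IntervalIntegrable ρ volume a b) (hw : IntervalIntegrable w volume a b) :
    ∫ θ in a..b, (∫ x in a..θ, ρ x) * w θ = ∫ x in a..b, ρ x * ∫ θ in x..b, w θ := by
  have hderiv : ∀ {φ : ℝ → ℝ}, IntervalIntegrable φ volume a b →
      ∀ᵐ x ∂volume.restrict (Ι a b), deriv (fun y => ∫ t in a..y, φ t) x = φ x := by
    intro φ hφ
    rw [ae_restrict_iff' measurableSet_uIoc]
    filter_upwards [hφ.ae_hasDerivAt_integral] with x hx hxI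
    exact (hx (uIoc_subset_uIcc hxI) a left_mem_uIcc).deriv
  have hP := hρ.absolutelyContinuousOnInterval_intervalIntegral left_mem_uIcc
  have hW := hw.absolutelyContinuousOnInterval_intervalIntegral left_mem_uIcc
  have hparts := hP.integral_mul_deriv_eq_deriv_mul hW
  rw [integral_same, zero_mul, sub_zero] at hparts
  have hL : ∫ θ in a..b, (∫ x in a..θ, ρ x) * w θ
      = ∫ θ in a..b, (∫ x in a..θ, ρ x) * deriv (fun y => ∫ t in a..y, w t) θ :=
    integral_congr_ae_restrict ((hderiv hw).mono fun x hx => by simp only [hx])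
  have hR : ∫ x in a..b, deriv (fun y => ∫ t in a..y, ρ t) x * ∫ θ in a..x, w θ
      = ∫ x in a..b, ρ x * ∫ θ in a..x, w θ :=
    integral_congr_ae_restrict ((hderiv hρ).mono fun x hx => by simp only [hx])
  have htail : EqOn (fun x => ρ x * ∫ θ in x..b, w θ)
      (fun x => ρ x * ((∫ θ in a..b, w θ) - ∫ θ in a..x, w θ)) (uIcc a b) := fun x hx => by
    simp only [integral_interval_sub_left hw (hw.mono_set (uIcc_subset_uIcc_left hx))]
  rw [hL, hparts, hR, integral_congr htail]
  simp only [mul_sub]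
  rw [integral_sub (hρ.mul_const _) (hρ.mul_continuousOn hW.continuousOn), integral_mul_const]

theorem intervalIntegral.integral_sub_primitive_mul_deriv {a b u₀ : ℝ} {φ q w W : ℝ → ℝ}
    (hW : ∀ θ ∈ uIcc a b, HasDerivAt W (w θ) θ) (hw : ContinuousOn w (uIcc a b))
    (hφ : IntervalIntegrable φ volume a b) (hq : IntervalIntegrable q volume a b) :
    ∫ θ in a..b, (φ θ - (u₀ + ∫ x in a..θ, q x)) * w θ
      = (∫ θ in a..b, φ θ * w θ - q θ * (W b - W θ)) - u₀ * (W b - W a) := by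
  have hwi : IntervalIntegrable w volume a b := hw.intervalIntegrable
  have hWc : ContinuousOn W (uIcc a b) := fun θ hθ => (hW θ hθ).continuousAt.continuousWithinAt
  have hQ : ContinuousOn (fun θ => ∫ x in a..θ, q x) (uIcc a b) :=
    (hq.absolutelyContinuousOnInterval_intervalIntegral left_mem_uIcc).continuousOn
  have htail : EqOn (fun x => q x * ∫ θ in x..b, w θ) (fun x => q x * (W b - W x)) (uIcc a b) :=
    fun x hx => by
      dsimp only
      rw [integral_eq_sub_of_hasDerivAt (fun θ hθ => hW θ (uIcc_subset_uIcc_right hx hθ))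
        (hwi.mono_set (uIcc_subset_uIcc_right hx))]
  have hqW : IntervalIntegrable (fun θ => q θ * (W b - W θ)) volume a b :=
    hq.mul_continuousOn (continuousOn_const.sub hWc)
  simp only [sub_mul, add_mul]
  rw [integral_sub (hφ.mul_continuousOn hw) ((hwi.const_mul u₀).add (hwi.continuousOn_mul hQ)),
    integral_sub (hφ.mul_continuousOn hw) hqW,
    integral_add (hwi.const_mul u₀) (hwi.continuousOn_mul hQ), integral_const_mul,
    integral_eq_sub_of_hasDerivAt hW hwi, integral_primitive_mul_eq hq hwi, integral_congr htail]
  ring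

noncomputable section Platform

variable {lam a b θ : ℝ} {J : ℕ} {F G f g q : ℝ → ℝ}

/-- The mass of consumers with value above `θ`: `λ (1 - F θ ^ J)` on the platform plus
`(1 - λ) (1 - G θ ^ J)` off it. -/
def upperMass (lam : ℝ) (J : ℕ) (F G : ℝ → ℝ) (θ : ℝ) : ℝ :=
  1 - lam * F θ ^ J - (1 - lam) * G θ ^ J

def virtualProfit (lam : ℝ) (J : ℕ) (F G g : ℝ → ℝ) (θ s : ℝ) : ℝ :=
  (1 - lam) * ((θ * s - s ^ 2 / 2) * (G θ ^ (J - 1) * g θ)) - s * upperMass lam J F G θ / J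

def optimalQuality (lam : ℝ) (J : ℕ) (F G g : ℝ → ℝ) (θ : ℝ) : ℝ :=
  max 0 (θ - upperMass lam J F G θ / ((1 - lam) * J * G θ ^ (J - 1) * g θ))

theorem upperMass_nonneg (hlam0 : 0 ≤ lam) (hlam1 : lam ≤ 1) (hF : F θ ∈ Icc 0 1)
    (hG : G θ ∈ Icc 0 1) : 0 ≤ upperMass lam J F G θ := by
  have hFJ : F θ ^ J ≤ 1 := pow_le_one₀ hF.1 hF.2
  have hGJ : G θ ^ J ≤ 1 := pow_le_one₀ hG.1 hG.2
  unfold upperMass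
  nlinarith

theorem optimalQuality_le (hlam0 : 0 ≤ lam) (hlam1 : lam < 1) (hF : F θ ∈ Icc 0 1)
    (hG : G θ ∈ Icc 0 1) (hg : 0 ≤ g θ) : optimalQuality lam J F G g θ ≤ max 0 θ := by
  have hc := upperMass_nonneg (J := J) hlam0 hlam1.le hF hG
  have hden : 0 ≤ (1 - lam) * J * G θ ^ (J - 1) * g θ := by
    have := hG.1
    have : 0 ≤ 1 - lam := by linarith
    positivity
  exact max_le_max le_rfl (sub_le_self _ (div_nonneg hc hden))

theorem continuousOn_optimalQuality {s : Set ℝ} (hlam1 : lam < 1) (hJ : J ≠ 0)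
    (hF : ContinuousOn F s) (hG : ContinuousOn G s) (hg : ContinuousOn g s)
    (hGpos : ∀ θ ∈ s, 0 < G θ) (hgpos : ∀ θ ∈ s, 0 < g θ) :
    ContinuousOn (optimalQuality lam J F G g) s := by
  have hden : ∀ θ ∈ s, (1 - lam) * J * G θ ^ (J - 1) * g θ ≠ 0 := fun θ hθ => by
    have := hGpos θ hθ
    have := hgpos θ hθ
    have : 0 < 1 - lam := by linarith
    have : (0 : ℝ) < J := by positivity
    positivity
  unfold optimalQuality upperMass
  exact continuousOn_const.sup (continuousOn_id.sub (by fun_prop (disch := exact hden)))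

theorem virtualProfit_le_optimalQuality {s : ℝ} (hlam1 : lam < 1) (hJ : J ≠ 0) (hG : 0 < G θ)
    (hg : 0 < g θ) (hs : 0 ≤ s) :
    virtualProfit lam J F G g θ s
      ≤ virtualProfit lam J F G g θ (optimalQuality lam J F G g θ) := by
  have hA : 0 < (1 - lam) * (G θ ^ (J - 1) * g θ) := by
    have : 0 < 1 - lam := by linarith
    positivity
  have hJ' : (J : ℝ) ≠ 0 := Nat.cast_ne_zero.mpr hJ
  have hlam' : 1 - lam ≠ 0 := by linarith
  have hw : G θ ^ (J - 1) * g θ ≠ 0 := by positivity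
  set A := (1 - lam) * (G θ ^ (J - 1) * g θ)
  set B := θ * A - upperMass lam J F G θ / J
  have hquad : ∀ s, virtualProfit lam J F G g θ s = B * s - A * s ^ 2 / 2 := fun s => by
    unfold virtualProfit; ring
  have hvertex : optimalQuality lam J F G g θ = max 0 (B / A) := by
    unfold optimalQuality
    congr 1
    simp only [A, B]
    field_simp
  rw [hquad, hquad, hvertex]
  exact mul_sub_mul_sq_div_two_le_max_zero_div hA hs

theorem intervalIntegrable_virtualProfit (hab : a ≤ b) (hFc : ContinuousOn F (Icc a b))
    (hGc : ContinuousOn G (Icc a b)) (hgc : ContinuousOn g (Icc a b))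
    (hq : IntervalIntegrable q volume a b)
    (hq2 : IntervalIntegrable (fun θ => q θ ^ 2) volume a b) :
    IntervalIntegrable (fun θ => virtualProfit lam J F G g θ (q θ)) volume a b := by
  rw [← uIcc_of_le hab] at hFc hGc hgc
  have hlin : ContinuousOn
      (fun θ => (1 - lam) * θ * (G θ ^ (J - 1) * g θ) - upperMass lam J F G θ / J) (uIcc a b) := by
    unfold upperMass; fun_prop
  have hsq : ContinuousOn (fun θ => (1 - lam) * (G θ ^ (J - 1) * g θ) / 2) (uIcc a b) := by
    fun_prop
  convert (hq.mul_continuousOn hlin).sub (hq2.mul_continuousOn hsq) using 2 with θ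
  unfold virtualProfit
  ring

theorem profit_eq_integral_virtualProfit (hab : a ≤ b) (hJ : J ≠ 0)
    (hF : ∀ θ ∈ Icc a b, HasDerivAt F (f θ) θ) (hG : ∀ θ ∈ Icc a b, HasDerivAt G (g θ) θ)
    (hfc : ContinuousOn f (Icc a b)) (hgc : ContinuousOn g (Icc a b)) (hFb : F b = 1)
    (hGb : G b = 1) (hq : IntervalIntegrable q volume a b)
    (hq2 : IntervalIntegrable (fun θ => q θ ^ 2) volume a b) (u₀ : ℝ) :
    (1 - lam) * (∫ θ in a..b,
        (θ * q θ - q θ ^ 2 / 2 - (u₀ + ∫ x in a..θ, q x)) * (G θ ^ (J - 1) * g θ))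
      + lam * (∫ θ in a..b, (θ ^ 2 / 2 - (u₀ + ∫ x in a..θ, q x)) * (F θ ^ (J - 1) * f θ))
    = lam * (∫ θ in a..b, θ ^ 2 / 2 * (F θ ^ (J - 1) * f θ))
      + (∫ θ in a..b, virtualProfit lam J F G g θ (q θ)) - u₀ * upperMass lam J F G a / J := by
  rw [← uIcc_of_le hab] at hF hG hfc hgc
  have hFc : ContinuousOn F (uIcc a b) := HasDerivAt.continuousOn hF
  have hGc : ContinuousOn G (uIcc a b) := HasDerivAt.continuousOn hG
  have hwc : ContinuousOn (fun θ => G θ ^ (J - 1) * g θ) (uIcc a b) := by fun_prop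
  have hvc : ContinuousOn (fun θ => F θ ^ (J - 1) * f θ) (uIcc a b) := by fun_prop
  have hsurplus : IntervalIntegrable (fun θ => θ * q θ - q θ ^ 2 / 2) volume a b :=
    (hq.continuousOn_mul continuousOn_id).sub (hq2.div_const 2)
  have hvalue : IntervalIntegrable (fun θ : ℝ => θ ^ 2 / 2) volume a b :=
    (continuous_pow 2).intervalIntegrable a b |>.div_const 2
  have hWc : ContinuousOn (fun θ => G b ^ J / J - G θ ^ J / J) (uIcc a b) :=
    continuousOn_const.sub ((hGc.pow J).div_const _)
  have hVc : ContinuousOn (fun θ => F b ^ J / J - F θ ^ J / J) (uIcc a b) :=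
    continuousOn_const.sub ((hFc.pow J).div_const _)
  rw [integral_sub_primitive_mul_deriv (fun θ hθ => (hG θ hθ).pow_div_natCast hJ) hwc hsurplus hq,
    integral_sub_primitive_mul_deriv (fun θ hθ => (hF θ hθ).pow_div_natCast hJ) hvc hvalue hq,
    integral_sub (hvalue.mul_continuousOn hvc) (hq.mul_continuousOn hVc)]
  have hvirtual : ∫ θ in a..b, virtualProfit lam J F G g θ (q θ)
      = (1 - lam) * (∫ θ in a..b, (θ * q θ - q θ ^ 2 / 2) * (G θ ^ (J - 1) * g θ)
          - q θ * (G b ^ J / J - G θ ^ J / J))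
        - lam * ∫ θ in a..b, q θ * (F b ^ J / J - F θ ^ J / J) := by
    rw [← intervalIntegral.integral_const_mul, ← intervalIntegral.integral_const_mul,
      ← integral_sub (((hsurplus.mul_continuousOn hwc).sub (hq.mul_continuousOn hWc)).const_mul _)
        ((hq.mul_continuousOn hVc).const_mul _)]
    refine integral_congr fun θ _ => ?_
    simp only [virtualProfit, upperMass, hFb, hGb]
    ring
  rw [hvirtual]
  simp only [upperMass, hFb, hGb]
  ring

end Platform

theorem stmt_3_general (θL θH lam : ℝ) (J : ℕ) (hJ : 1 ≤ J) (hθ : θL < θH)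
    (hlam0 : 0 ≤ lam) (hlam1 : lam < 1)
    (F G f g : ℝ → ℝ)
    (hF : ∀ θ ∈ Set.Icc θL θH, HasDerivAt F (f θ) θ)
    (hG : ∀ θ ∈ Set.Icc θL θH, HasDerivAt G (g θ) θ)
    (hfc : ContinuousOn f (Set.Icc θL θH))
    (hgc : ContinuousOn g (Set.Icc θL θH))
    (hFrange : ∀ θ ∈ Set.Icc θL θH, F θ ∈ Set.Icc (0:ℝ) 1)
    (hGrange : ∀ θ ∈ Set.Icc θL θH, G θ ∈ Set.Icc (0:ℝ) 1)
    (hFH : F θH = 1) (hGH : G θH = 1)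
    (hg0 : ∀ θ ∈ Set.Ioo θL θH, 0 < g θ)
    (qhat : ℝ → ℝ)
    (hqhat : ∀ θ, qhat θ =
      max 0 (θ - (1 - lam * F θ ^ J - (1 - lam) * G θ ^ J) /
        ((1 - lam) * (J : ℝ) * G θ ^ (J - 1) * g θ)))
    (profit : (ℝ → ℝ) → ℝ → ℝ)
    (hprofit : ∀ q u0, profit q u0 =
      (1 - lam) * (∫ θ in θL..θH,
        (θ * q θ - (q θ) ^ 2 / 2 - (u0 + ∫ x in θL..θ, q x)) * (G θ ^ (J - 1) * g θ))
      + lam * (∫ θ in θL..θH,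
        (θ ^ 2 / 2 - (u0 + ∫ x in θL..θ, q x)) * (F θ ^ (J - 1) * f θ))) :
    ∀ q : ℝ → ℝ, ∀ u0 : ℝ, Measurable q →
      (∃ C, ∀ θ ∈ Set.Icc θL θH, q θ ≤ C) →
      (∀ θ ∈ Set.Icc θL θH, 0 ≤ q θ) → 0 ≤ u0 →
      profit q u0 ≤ profit qhat 0 := by
  intro q u₀ hqm ⟨C, hqC⟩ hq0 hu₀
  have hab := hθ.le
  have hθL : θL ∈ Icc θL θH := left_mem_Icc.2 hab
  have hJ0 : J ≠ 0 := Nat.one_le_iff_ne_zero.mp hJ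
  have hIoo : Ioo θL θH ⊆ Icc θL θH := Ioo_subset_Icc_self
  have hGpos : ∀ θ ∈ Ioo θL θH, 0 < G θ := fun θ hθ =>
    (hGrange θL hθL).1.trans_lt <|
      strictMonoOn_Icc_of_hasDerivAt_pos hG hg0 hθL (hIoo hθ) hθ.1
  have hqhat_eq : qhat = optimalQuality lam J F G g := funext hqhat
  subst hqhat_eq
  have hFc := HasDerivAt.continuousOn hF
  have hGc := HasDerivAt.continuousOn hG
  obtain ⟨hq, hq2⟩ := intervalIntegrable_and_sq_of_mem_Icc hab hqm.aestronglyMeasurable.restrict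
    fun θ hθ => ⟨hq0 θ (hIoo hθ), hqC θ (hIoo hθ)⟩
  obtain ⟨hqhat, hqhat2⟩ := intervalIntegrable_and_sq_of_mem_Icc hab
    ((continuousOn_optimalQuality hlam1 hJ0 (hFc.mono hIoo) (hGc.mono hIoo) (hgc.mono hIoo) hGpos
      hg0).aestronglyMeasurable measurableSet_Ioo)
    fun θ hθ => ⟨le_max_left _ _, (optimalQuality_le hlam0 hlam1 (hFrange θ (hIoo hθ))
      (hGrange θ (hIoo hθ)) (hg0 θ hθ).le).trans (max_le_max le_rfl hθ.2.le)⟩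
  have hpointwise := integral_mono_on_of_le_Ioo hab
    (intervalIntegrable_virtualProfit hab hFc hGc hgc hq hq2)
    (intervalIntegrable_virtualProfit hab hFc hGc hgc hqhat hqhat2) fun θ hθ =>
      virtualProfit_le_optimalQuality hlam1 hJ0 (hGpos θ hθ) (hg0 θ hθ) (hq0 θ (hIoo hθ))
  have hrent : 0 ≤ u₀ * upperMass lam J F G θL / J :=
    div_nonneg (mul_nonneg hu₀ (upperMass_nonneg hlam0 hlam1.le (hFrange θL hθL)
      (hGrange θL hθL))) (Nat.cast_nonneg J)
  rw [hprofit, hprofit, profit_eq_integral_virtualProfit hab hJ0 hF hG hfc hgc hFH hGH hq hq2,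
    profit_eq_integral_virtualProfit hab hJ0 hF hG hfc hgc hFH hGH hqhat hqhat2, zero_mul, zero_div]
  linarith

/-- The quality schedule
`q̂*(θ) = max{0, θ − (1 − λF^J − (1−λ)G^J)/((1−λ)·J·G^{J−1}·g)}`
together with zero rent at the bottom maximizes the seller's combined on- and
off-platform profit
`Π(q,u0) = (1−λ)∫[θq − q²/2 − U]·G^{J−1}g + λ∫[θ²/2 − U]·F^{J−1}f`,
where `U(θ) = u0 + ∫_{θL}^{θ} q`, over measurable bounded nonnegative `q` and `u0 ≥ 0`. -/
theorem stmt_3 (θL θH lam : ℝ) (J : ℕ) (hJ : 1 ≤ J) (hθ : θL < θH)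
    (hlam0 : 0 ≤ lam) (hlam1 : lam < 1)
    (F G f g : ℝ → ℝ)
    (hF : ∀ θ ∈ Set.Icc θL θH, HasDerivAt F (f θ) θ)
    (hG : ∀ θ ∈ Set.Icc θL θH, HasDerivAt G (g θ) θ)
    (hfc : ContinuousOn f (Set.Icc θL θH))
    (hgc : ContinuousOn g (Set.Icc θL θH))
    (hFrange : ∀ θ ∈ Set.Icc θL θH, F θ ∈ Set.Icc (0:ℝ) 1)
    (hGrange : ∀ θ ∈ Set.Icc θL θH, G θ ∈ Set.Icc (0:ℝ) 1)
    (hFH : F θH = 1) (hGH : G θH = 1)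
    (hf0 : ∀ θ ∈ Set.Ioo θL θH, 0 ≤ f θ)
    (hg0 : ∀ θ ∈ Set.Ioo θL θH, 0 < g θ)
    (qhat : ℝ → ℝ)
    (hqhat : ∀ θ, qhat θ =
      max 0 (θ - (1 - lam * F θ ^ J - (1 - lam) * G θ ^ J) /
        ((1 - lam) * (J : ℝ) * G θ ^ (J - 1) * g θ)))
    (profit : (ℝ → ℝ) → ℝ → ℝ)
    (hprofit : ∀ q u0, profit q u0 =
      (1 - lam) * (∫ θ in θL..θH,
        (θ * q θ - (q θ) ^ 2 / 2 - (u0 + ∫ x in θL..θ, q x)) * (G θ ^ (J - 1) * g θ))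
      + lam * (∫ θ in θL..θH,
        (θ ^ 2 / 2 - (u0 + ∫ x in θL..θ, q x)) * (F θ ^ (J - 1) * f θ))) :
    ∀ q : ℝ → ℝ, ∀ u0 : ℝ, Measurable q →
      (∃ C, ∀ θ ∈ Set.Icc θL θH, q θ ≤ C) →
      (∀ θ ∈ Set.Icc θL θH, 0 ≤ q θ) → 0 ≤ u0 →
      profit q u0 ≤ profit qhat 0 :=
  stmt_3_general θL θH lam J hJ hθ hlam0 hlam1 F G f g hF hG hfc hgc hFrange hGrange hFH hGH hg0
    qhat hqhat profit hprofit
end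

section
/- Let μ_F and μ_G be Borel probability measures on [0, M] with cumulative distribution functions F and G. Suppose ∫_v^M F(t) dt ≤ ∫_v^M G(t) dt for all v ∈ [0, M], with equality at v = 0 (i.e., F is a mean-preserving spread of G). Then for every continuous convex function φ : [0, M] → ℝ, ∫ φ dμ_F ≥ ∫ φ dμ_G. -/
open MeasureTheory Set

/-! Both measures have the same mean (the equality at `v = 0`), and the call payoff `(x - t)⁺`
integrates to `(M - t) - ∫_t^M cdf`, so the spread hypothesis says exactly that `μF` gives every
call payoff with strike in `[0, M]` at least the integral `μG` does. On a fine grid, a continuous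
convex `φ` is uniformly close to its piecewise-linear interpolant, which is an affine function
plus a combination of call payoffs whose coefficients, the jumps of the slope, are nonnegative by
convexity. So the inequality holds for the interpolants, and passes to `φ` in the limit. -/

theorem integral_max_sub_eq_integral_measureReal_Ioi (μ : Measure ℝ) [IsFiniteMeasure μ]
    {t M : ℝ} (hμ : μ (Ioi M) = 0) (htM : t ≤ M) :
    ∫ x, max (x - t) 0 ∂μ = ∫ s in t..M, μ.real (Ioi s) := by
  have hle : ∀ᵐ x ∂μ, x ≤ M := by
    filter_upwards [measure_eq_zero_iff_ae_notMem.1 hμ] with x hx using not_lt.1 hx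
  have hint : Integrable (fun x => max (x - t) 0) μ := by
    refine Integrable.of_bound (by fun_prop) (M - t) (hle.mono fun x hx => ?_)
    rw [Real.norm_of_nonneg (le_max_right _ _)]
    exact max_le (by linarith) (by linarith)
  have hsuper : ∀ s ∈ Ioi (0 : ℝ), {x | s < max (x - t) 0} = Ioi (s + t) := by
    intro s hs
    ext x
    simp only [mem_ofPred_eq, mem_Ioi, lt_max_iff, mem_Ioi.mp hs |>.not_gt, or_false]
    constructor <;> intro h <;> linarith
  have htail : ∀ s ∈ Ioi (0 : ℝ) \ Ioc 0 (M - t), μ.real (Ioi (s + t)) = 0 := by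
    rintro s ⟨hs0, hs⟩
    have : M < s + t := by
      simp only [mem_Ioc, not_and, not_le] at hs
      linarith [hs hs0]
    simp [Measure.real, measure_mono_null (Ioi_subset_Ioi this.le) hμ]
  calc ∫ x, max (x - t) 0 ∂μ = ∫ s in Ioi 0, μ.real {x | s < max (x - t) 0} :=
        hint.integral_eq_integral_meas_lt (.of_forall fun _ => le_max_right _ _)
    _ = ∫ s in Ioi 0, μ.real (Ioi (s + t)) :=
        setIntegral_congr_fun measurableSet_Ioi fun s hs => by rw [hsuper s hs]
    _ = ∫ s in Ioc 0 (M - t), μ.real (Ioi (s + t)) :=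
        setIntegral_eq_of_subset_of_forall_sdiff_eq_zero measurableSet_Ioi Ioc_subset_Ioi_self htail
    _ = ∫ s in t..M, μ.real (Ioi s) := by
        rw [← intervalIntegral.integral_of_le (by linarith),
          intervalIntegral.integral_comp_add_right (fun s => μ.real (Ioi s))]
        simp

theorem integral_max_sub_eq_sub_integral_cdf (μ : Measure ℝ) [IsProbabilityMeasure μ]
    {t M : ℝ} (hμ : μ (Ioi M) = 0) (htM : t ≤ M) :
    ∫ x, max (x - t) 0 ∂μ = (M - t) - ∫ s in t..M, μ.real (Iic s) := by
  have hcdf : Monotone fun s => μ.real (Iic s) := fun _ _ h =>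
    measureReal_mono (Iic_subset_Iic.2 h)
  rw [integral_max_sub_eq_integral_measureReal_Ioi μ hμ htM]
  simp_rw [← compl_Iic, probReal_compl_eq_one_sub measurableSet_Iic]
  rw [intervalIntegral.integral_sub intervalIntegrable_const hcdf.intervalIntegrable]
  simp

theorem integral_eq_sub_integral_cdf (μ : Measure ℝ) [IsProbabilityMeasure μ] {M : ℝ}
    (hμ : ∀ᵐ x ∂μ, 0 ≤ x) (hμM : μ (Ioi M) = 0) (hM : 0 ≤ M) :
    ∫ x, x ∂μ = M - ∫ s in 0..M, μ.real (Iic s) := by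
  have hid : (fun x => x) =ᵐ[μ] fun x => max (x - 0) 0 := hμ.mono fun x hx => by simp [hx]
  rw [integral_congr_ae hid, integral_max_sub_eq_sub_integral_cdf μ hμM hM, sub_zero]

theorem ContinuousOn.integrable_of_ae_mem {X : Type*} [TopologicalSpace X] [T2Space X]
    [MeasurableSpace X] [OpensMeasurableSpace X] {μ : Measure X} [IsFiniteMeasureOnCompacts μ]
    {E : Type*} [NormedAddCommGroup E] {K : Set X} {f : X → E} (hf : ContinuousOn f K)
    (hK : IsCompact K) (hμ : ∀ᵐ x ∂μ, x ∈ K) :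
    Integrable f μ := by
  rw [← Measure.restrict_eq_self_of_ae_mem hμ]
  exact hf.integrableOn_compact hK

theorem abs_integral_sub_integral_le {α : Type*} [MeasurableSpace α] {μ : Measure α}
    [IsProbabilityMeasure μ] {s : Set α} (hμ : ∀ᵐ x ∂μ, x ∈ s) {φ ψ : α → ℝ}
    (hφ : Integrable φ μ) (hψ : Integrable ψ μ) {ε : ℝ}
    (hψφ : ∀ x ∈ s, |ψ x - φ x| ≤ ε) :
    |∫ x, ψ x ∂μ - ∫ x, φ x ∂μ| ≤ ε := by
  rw [← integral_sub hψ hφ]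
  simpa using norm_integral_le_of_norm_le_const
    (hμ.mono fun x hx => (Real.norm_eq_abs _).trans_le (hψφ x hx))

theorem integral_le_of_forall_approx {α : Type*} [MeasurableSpace α] {μ ν : Measure α}
    [IsProbabilityMeasure μ] [IsProbabilityMeasure ν] {s : Set α}
    (hμ : ∀ᵐ x ∂μ, x ∈ s) (hν : ∀ᵐ x ∂ν, x ∈ s) {φ : α → ℝ}
    (hφμ : Integrable φ μ) (hφν : Integrable φ ν)
    (happrox : ∀ ε > 0, ∃ ψ : α → ℝ, Integrable ψ μ ∧ Integrable ψ ν ∧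
      ∫ x, ψ x ∂μ ≤ ∫ x, ψ x ∂ν ∧ ∀ x ∈ s, |ψ x - φ x| ≤ ε) :
    ∫ x, φ x ∂μ ≤ ∫ x, φ x ∂ν := by
  refine le_of_forall_pos_le_add fun ε hε => ?_
  obtain ⟨ψ, hψμ, hψν, hle, hψφ⟩ := happrox (ε / 2) (by positivity)
  have hμε := abs_le.1 (abs_integral_sub_integral_le hμ hφμ hψμ hψφ)
  have hνε := abs_le.1 (abs_integral_sub_integral_le hν hφν hψν hψφ)
  linarith [hμε.1, hνε.2]

/-- The piecewise-linear interpolant of `φ` at knots `t 0 < ⋯ < t n`, written as an affine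
function plus the hinges `(x - t (i + 1))⁺` weighted by the jumps of the slope. -/
noncomputable def hingeInterp (φ : ℝ → ℝ) (t : ℕ → ℝ) (n : ℕ) (x : ℝ) : ℝ :=
  φ (t 0) + slope φ (t 0) (t 1) * (x - t 0) +
    ∑ i ∈ Finset.range (n - 1),
      (slope φ (t (i + 1)) (t (i + 2)) - slope φ (t i) (t (i + 1))) * max (x - t (i + 1)) 0

section HingeInterp

variable {φ : ℝ → ℝ} {t : ℕ → ℝ}

theorem continuous_hingeInterp (φ : ℝ → ℝ) (t : ℕ → ℝ) (n : ℕ) :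
    Continuous (hingeInterp φ t n) := by
  unfold hingeInterp; fun_prop

theorem slope_hinge_sum_telescope (φ : ℝ → ℝ) (t : ℕ → ℝ) (x : ℝ) (j : ℕ) :
    φ (t 0) + slope φ (t 0) (t 1) * (x - t 0) +
      ∑ i ∈ Finset.range j,
        (slope φ (t (i + 1)) (t (i + 2)) - slope φ (t i) (t (i + 1))) * (x - t (i + 1)) =
      φ (t j) + slope φ (t j) (t (j + 1)) * (x - t j) := by
  induction j with
  | zero => simp
  | succ j ih =>
    -- `(b - a) • slope f a b = f b - f a` holds even for `a = b`, so the knots are arbitrary.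
    have hstep := sub_smul_slope φ (t j) (t (j + 1))
    rw [smul_eq_mul, vsub_eq_sub] at hstep
    rw [Finset.sum_range_succ, ← add_assoc, ih]
    linear_combination hstep

theorem hingeInterp_eq_of_mem_Icc (ht : Monotone t) {n j : ℕ} (hj : j < n) {x : ℝ}
    (hx : x ∈ Icc (t j) (t (j + 1))) :
    hingeInterp φ t n x = φ (t j) + slope φ (t j) (t (j + 1)) * (x - t j) := by
  rw [hingeInterp, ← Finset.sum_range_add_sum_Ico _ (Nat.le_sub_one_of_lt hj),
    Finset.sum_eq_zero (s := Finset.Ico j (n - 1)) fun i hi => ?_, add_zero,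
    ← slope_hinge_sum_telescope φ t x j]
  · refine congrArg _ (Finset.sum_congr rfl fun i hi => ?_)
    rw [max_eq_left (by linarith [hx.1, ht (by simp at hi; omega : i + 1 ≤ j)])]
  · rw [max_eq_right (by linarith [hx.2, ht (by simp at hi; omega : j + 1 ≤ i + 1)]), mul_zero]

theorem abs_add_slope_mul_sub_le {p q x ε : ℝ} (hx : x ∈ Icc p q)
    (hp : |φ p - φ x| ≤ ε) (hq : |φ q - φ x| ≤ ε) :
    |φ p + slope φ p q * (x - p) - φ x| ≤ ε := by
  rcases hx.1.trans hx.2 |>.eq_or_lt with hpq | hpq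
  · obtain rfl : x = p := le_antisymm (hpq ▸ hx.2) hx.1
    simpa using hp
  set l := (x - p) / (q - p)
  have hl0 : 0 ≤ l := div_nonneg (by linarith [hx.1]) (by linarith)
  have hl1 : l ≤ 1 := (div_le_one (by linarith)).2 (by linarith [hx.2])
  have hconv :
      φ p + slope φ p q * (x - p) - φ x = (1 - l) * (φ p - φ x) + l * (φ q - φ x) := by
    simp only [l, slope_def_field]; field_simp; ring
  rw [hconv, abs_le]
  rw [abs_le] at hp hq
  constructor <;> nlinarith

theorem exists_lt_mem_Icc_succ {α : Type*} [LinearOrder α] {t : ℕ → α} {n : ℕ} (hn : 0 < n)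
    {x : α} (h0 : t 0 ≤ x) (hn' : x ≤ t n) : ∃ j < n, x ∈ Icc (t j) (t (j + 1)) := by
  classical
  have hex : ∃ j, x ≤ t (j + 1) := ⟨n - 1, by rwa [Nat.sub_add_cancel hn]⟩
  refine ⟨Nat.find hex, ?_, ?_, Nat.find_spec hex⟩
  · have := Nat.find_min' hex (show x ≤ t (n - 1 + 1) by rwa [Nat.sub_add_cancel hn])
    omega
  · rcases hj : Nat.find hex with _ | j
    · exact h0
    · exact le_of_not_ge (Nat.find_min hex (by omega : j < Nat.find hex))

theorem exists_hingeInterp_approx {a b : ℝ} (hab : a < b) (hφ : ContinuousOn φ (Icc a b))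
    {ε : ℝ} (hε : 0 < ε) :
    ∃ (n : ℕ) (t : ℕ → ℝ), StrictMono t ∧ (∀ i ≤ n, t i ∈ Icc a b) ∧
      ∀ x ∈ Icc a b, |hingeInterp φ t n x - φ x| ≤ ε := by
  obtain ⟨δ, hδ, hφδ⟩ := Metric.uniformContinuousOn_iff.1
    (isCompact_Icc.uniformContinuousOn_of_continuous hφ) ε hε
  obtain ⟨n, hn⟩ := exists_nat_gt ((b - a) / δ)
  have hn0 : (0 : ℝ) < n := lt_trans (by have := sub_pos.2 hab; positivity) hn
  set h := (b - a) / n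
  have hhδ : h < δ := by
    rw [div_lt_iff₀ hn0]; rw [div_lt_iff₀ hδ] at hn; linarith
  set t : ℕ → ℝ := fun i => a + i * h
  have ht : StrictMono t := fun i j hij => by
    have : 0 < h := div_pos (sub_pos.2 hab) hn0
    simp only [t]; gcongr
  have htn : t n = b := by simp only [t, h]; field_simp; ring
  have hmem : ∀ i ≤ n, t i ∈ Icc a b := fun i hi =>
    ⟨by simpa [t] using ht.monotone (Nat.zero_le i), htn ▸ ht.monotone hi⟩
  refine ⟨n, t, ht, hmem, fun x hx => ?_⟩
  obtain ⟨j, hjn, hxj⟩ := exists_lt_mem_Icc_succ (t := t) (by exact_mod_cast hn0)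
    (by simpa [t] using hx.1) (htn ▸ hx.2)
  have hcell : t (j + 1) - t j = h := by simp only [t]; push_cast; ring
  have hclose : ∀ i ≤ n, |t i - x| < δ → |φ (t i) - φ x| ≤ ε := fun i hi hix =>
    (hφδ _ (hmem i hi) _ hx hix).le
  rw [hingeInterp_eq_of_mem_Icc ht.monotone hjn hxj]
  refine abs_add_slope_mul_sub_le hxj (hclose j hjn.le ?_) (hclose (j + 1) hjn ?_)
  · rw [abs_sub_comm, abs_of_nonneg (by linarith [hxj.1])]; linarith [hxj.2]
  · rw [abs_of_nonneg (by linarith [hxj.2])]; linarith [hxj.1]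

theorem integral_hingeInterp (μ : Measure ℝ) [IsProbabilityMeasure μ]
    (hμ : Integrable (fun x => x) μ) (n : ℕ) :
    ∫ x, hingeInterp φ t n x ∂μ =
      φ (t 0) + slope φ (t 0) (t 1) * ((∫ x, x ∂μ) - t 0) +
        ∑ i ∈ Finset.range (n - 1),
          (slope φ (t (i + 1)) (t (i + 2)) - slope φ (t i) (t (i + 1))) *
            ∫ x, max (x - t (i + 1)) 0 ∂μ := by
  have hcall : ∀ c, Integrable (fun x => max (x - c) 0) μ := fun c =>
    (hμ.sub (integrable_const c)).pos_part
  have hlin : Integrable (fun x => slope φ (t 0) (t 1) * (x - t 0)) μ :=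
    (hμ.sub (integrable_const _)).const_mul _
  have haff : Integrable (fun x => φ (t 0) + slope φ (t 0) (t 1) * (x - t 0)) μ :=
    (integrable_const _).add hlin
  unfold hingeInterp
  rw [integral_add haff
      (integrable_finsetSum _ fun i _ => (hcall _).const_mul _),
    integral_add (integrable_const _) hlin,
    integral_finsetSum _ fun i _ => (hcall _).const_mul _, integral_const_mul,
    integral_sub hμ (integrable_const _)]
  simp [integral_const_mul]

theorem integral_hingeInterp_le {s : Set ℝ} (hφ : ConvexOn ℝ s φ) (ht : StrictMono t)
    {n : ℕ} (hts : ∀ i ≤ n, t i ∈ s) {μ ν : Measure ℝ}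
    [IsProbabilityMeasure μ] [IsProbabilityMeasure ν]
    (hμ : Integrable (fun x => x) μ) (hν : Integrable (fun x => x) ν)
    (hmean : ∫ x, x ∂μ = ∫ x, x ∂ν)
    (hcall : ∀ i ≤ n, ∫ x, max (x - t i) 0 ∂μ ≤ ∫ x, max (x - t i) 0 ∂ν) :
    ∫ x, hingeInterp φ t n x ∂μ ≤ ∫ x, hingeInterp φ t n x ∂ν := by
  rw [integral_hingeInterp μ hμ, integral_hingeInterp ν hν, hmean]
  refine add_le_add le_rfl (Finset.sum_le_sum fun i hi => ?_)
  have hi : i + 2 ≤ n := by simp at hi; omega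
  have hslope := hφ.slope_mono_adjacent (y := t (i + 1)) (hts i (by omega)) (hts (i + 2) hi)
    (ht (by omega)) (ht (by omega))
  rw [← slope_def_field, ← slope_def_field] at hslope
  exact mul_le_mul_of_nonneg_left (hcall _ (by omega)) (sub_nonneg.2 hslope)

end HingeInterp

/-- If `F` is a mean-preserving spread of `G` (both CDFs of Borel
probability measures on `[0, M]`), i.e. `∫_v^M F ≤ ∫_v^M G` for all `v ∈ [0,M]`
with equality at `v = 0`, then `∫ φ dμ_F ≥ ∫ φ dμ_G` for every continuous convex
`φ : [0,M] → ℝ`. -/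
theorem stmt_5 (M : ℝ) (hM : 0 < M)
    (μF μG : Measure ℝ)
    [IsProbabilityMeasure μF] [IsProbabilityMeasure μG]
    (hFs : μF (Set.Icc 0 M)ᶜ = 0) (hGs : μG (Set.Icc 0 M)ᶜ = 0)
    (F G : ℝ → ℝ)
    (hF : ∀ v, F v = (μF (Set.Iic v)).toReal)
    (hG : ∀ v, G v = (μG (Set.Iic v)).toReal)
    (hmps : ∀ v ∈ Set.Icc (0:ℝ) M, (∫ t in v..M, F t) ≤ ∫ t in v..M, G t)
    (heq : (∫ t in (0:ℝ)..M, F t) = ∫ t in (0:ℝ)..M, G t) :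
    ∀ φ : ℝ → ℝ, ContinuousOn φ (Set.Icc 0 M) → ConvexOn ℝ (Set.Icc 0 M) φ →
      (∫ x, φ x ∂μG) ≤ ∫ x, φ x ∂μF := by
  intro φ hφc hφv
  have hFae : ∀ᵐ x ∂μF, x ∈ Icc 0 M := mem_ae_iff.2 hFs
  have hGae : ∀ᵐ x ∂μG, x ∈ Icc 0 M := mem_ae_iff.2 hGs
  have hIoi : Ioi M ⊆ (Icc 0 M)ᶜ := fun x hx h => (not_le.2 hx) h.2
  have hFM : μF (Ioi M) = 0 := measure_mono_null hIoi hFs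
  have hGM : μG (Ioi M) = 0 := measure_mono_null hIoi hGs
  have hmean : ∫ x, x ∂μG = ∫ x, x ∂μF := by
    rw [integral_eq_sub_integral_cdf μG (hGae.mono fun x hx => hx.1) hGM hM.le,
      integral_eq_sub_integral_cdf μF (hFae.mono fun x hx => hx.1) hFM hM.le]
    simp only [measureReal_def, ← hF, ← hG, heq]
  have hcall : ∀ t ∈ Icc 0 M, ∫ x, max (x - t) 0 ∂μG ≤ ∫ x, max (x - t) 0 ∂μF := by
    intro t ht
    rw [integral_max_sub_eq_sub_integral_cdf μG hGM ht.2,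
      integral_max_sub_eq_sub_integral_cdf μF hFM ht.2]
    simpa only [measureReal_def, ← hF, ← hG, sub_le_sub_iff_left] using hmps t ht
  refine integral_le_of_forall_approx hGae hFae (hφc.integrable_of_ae_mem isCompact_Icc hGae)
    (hφc.integrable_of_ae_mem isCompact_Icc hFae) fun ε hε => ?_
  obtain ⟨n, t, ht, hts, hψφ⟩ := exists_hingeInterp_approx hM hφc hε
  have hψ := (continuous_hingeInterp φ t n).continuousOn (s := Icc 0 M)
  refine ⟨_, hψ.integrable_of_ae_mem isCompact_Icc hGae,
    hψ.integrable_of_ae_mem isCompact_Icc hFae, ?_, hψφ⟩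
  exact integral_hingeInterp_le hφv ht hts
    (continuousOn_id.integrable_of_ae_mem isCompact_Icc hGae)
    (continuousOn_id.integrable_of_ae_mem isCompact_Icc hFae) hmean fun i hi => hcall _ (hts i hi)
end

section
/- Let μ and ν be Borel probability measures on [0, M] such that ∫ φ dμ ≥ ∫ φ dν for every continuous convex function φ : [0, M] → ℝ (μ dominates ν in the convex order). Then for every natural number J ≥ 1 and every continuous, nondecreasing, convex function U : [0, M] → ℝ, the highest order statistics satisfy ∫_{[0,M]^J} U(max_{1≤j≤J} x_j) d(μ^{⊗J})(x) ≥ ∫_{[0,M]^J} U(max_{1≤j≤J} x_j) d(ν^{⊗J})(x). -/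
open MeasureTheory

private lemma sup_mem_Icc {M : ℝ} {J : ℕ} (hJ : 1 ≤ J) {x : Fin J → ℝ}
    (hx : ∀ j, x j ∈ Set.Icc 0 M) : (⨆ j, x j) ∈ Set.Icc 0 M := by
  haveI : Nonempty (Fin J) := ⟨⟨0, hJ⟩⟩
  refine ⟨le_trans (hx (Classical.arbitrary _)).1
    (le_ciSup ((Set.finite_range x).bddAbove) _), ciSup_le fun j => (hx j).2⟩

private lemma continuous_fin_sup {J : ℕ} (hJ : 1 ≤ J) :
    Continuous fun x : Fin J → ℝ => ⨆ j, x j := by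
  haveI : Nonempty (Fin J) := ⟨⟨0, hJ⟩⟩
  have h : ∀ x : Fin J → ℝ, (⨆ j, x j)
      = Finset.univ.sup' Finset.univ_nonempty (fun j => x j) := fun x =>
    (Finset.sup'_univ_eq_ciSup x).symm
  simp_rw [h]
  rw [continuous_iff_continuousAt]
  intro x
  exact Filter.Tendsto.finset_sup'_nhds_apply Finset.univ_nonempty
    (fun i _ => (continuous_apply i).continuousAt)

private lemma convexOn_comp_max {M : ℝ} {U : ℝ → ℝ} (hUm : Monotone U)
    (hUcv : ConvexOn ℝ (Set.Icc 0 M) U) (y : ℝ) :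
    ConvexOn ℝ (Set.Icc 0 M) fun t => U (max y t) := by
  rcases le_total y M with hy | hy
  · refine ⟨convex_Icc _ _, fun t1 ht1 t2 ht2 a b ha hb hab => ?_⟩
    have h1 : max y t1 ∈ Set.Icc 0 M := ⟨le_max_of_le_right ht1.1, max_le hy ht1.2⟩
    have h2 : max y t2 ∈ Set.Icc 0 M := ⟨le_max_of_le_right ht2.1, max_le hy ht2.2⟩
    have hmax : max y (a • t1 + b • t2) ≤ a • max y t1 + b • max y t2 := by
      simp only [smul_eq_mul]
      apply max_le
      · have hy' : a * y + b * y = y := by rw [← add_mul, hab, one_mul]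
        linarith [mul_le_mul_of_nonneg_left (le_max_left y t1) ha,
          mul_le_mul_of_nonneg_left (le_max_left y t2) hb]
      · linarith [mul_le_mul_of_nonneg_left (le_max_right y t1) ha,
          mul_le_mul_of_nonneg_left (le_max_right y t2) hb]
    calc U (max y (a • t1 + b • t2)) ≤ U (a • max y t1 + b • max y t2) := hUm hmax
      _ ≤ a • U (max y t1) + b • U (max y t2) := hUcv.2 h1 h2 ha hb hab
  · have heq : Set.EqOn (fun _ : ℝ => U y) (fun t => U (max y t)) (Set.Icc 0 M) := by
      intro t ht
      simp [max_eq_left (le_trans ht.2 hy)]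
    exact (convexOn_const _ (convex_Icc _ _)).congr heq

private lemma key {M : ℝ} (hM : 0 < M) (μ ν : Measure ℝ) [IsProbabilityMeasure μ]
    [IsProbabilityMeasure ν]
    (hcx : ∀ φ : ℝ → ℝ, ContinuousOn φ (Set.Icc 0 M) →
      ConvexOn ℝ (Set.Icc 0 M) φ → (∫ x, φ x ∂ν) ≤ ∫ x, φ x ∂μ)
    (J : ℕ) (hJ : 1 ≤ J) :
    ∀ (U : ℝ → ℝ) (C : ℝ), Continuous U → Monotone U → ConvexOn ℝ (Set.Icc 0 M) U →
      (∀ t, |U t| ≤ C) →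
      (∫ x : Fin J → ℝ, U (⨆ j, x j) ∂(Measure.pi fun _ : Fin J => ν)) ≤
        ∫ x : Fin J → ℝ, U (⨆ j, x j) ∂(Measure.pi fun _ : Fin J => μ) := by
  induction J, hJ using Nat.le_induction with
  | base =>
    intro U C hUc hUm hUcv hC
    have hone : ∀ (m : Measure ℝ) [IsProbabilityMeasure m],
        (∫ x : Fin 1 → ℝ, U (⨆ j, x j) ∂(Measure.pi fun _ : Fin 1 => m)) = ∫ t, U t ∂m := by
      intro m _
      have h1 : ∀ x : Fin 1 → ℝ, (⨆ j, x j) = x default := fun x => ciSup_unique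
      simp_rw [h1]
      exact (measurePreserving_funUnique m (Fin 1)).integral_comp
        (MeasurableEquiv.funUnique (Fin 1) ℝ).measurableEmbedding U
    rw [hone ν, hone μ]
    exact hcx U hUc.continuousOn hUcv
  | succ J hJ ih =>
    intro U C hUc hUm hUcv hC
    haveI : Nonempty (Fin J) := ⟨⟨0, hJ⟩⟩
    set S : (Fin J → ℝ) → ℝ := fun x => ⨆ j, x j with hS
    have hSc : Continuous S := continuous_fin_sup hJ
    set F : ℝ × (Fin J → ℝ) → ℝ := fun p => U (max p.1 (S p.2)) with hF
    have hFc : Continuous F := hUc.comp (continuous_fst.max (hSc.comp continuous_snd))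
    have hFb : ∀ p, |F p| ≤ C := fun p => hC _
    -- sup over insertNth
    have hsup : ∀ (y : ℝ) (x : Fin J → ℝ),
        (⨆ j, (Fin.insertNth (α := fun _ : Fin (J + 1) => ℝ) 0 y x) j) = max y (⨆ j, x j) := by
      intro y x
      have happ : ∀ k : Fin J,
          Fin.insertNth (α := fun _ : Fin (J + 1) => ℝ) 0 y x k.succ = x k := by
        intro k
        have := Fin.insertNth_apply_succAbove (α := fun _ : Fin (J + 1) => ℝ)
          (0 : Fin (J + 1)) y x k
        simpa [Fin.succAbove_zero] using this
      apply le_antisymm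
      · refine ciSup_le fun j => ?_
        induction j using Fin.cases with
        | zero =>
          simp only [Fin.insertNth_apply_same]
          exact le_max_left _ _
        | succ k =>
          rw [happ k]
          exact le_max_of_le_right (le_ciSup ((Set.finite_range x).bddAbove) k)
      · apply max_le
        · have h0 : Fin.insertNth (α := fun _ : Fin (J + 1) => ℝ) 0 y x 0 = y :=
            Fin.insertNth_apply_same _ _ _
          exact le_trans (le_of_eq h0.symm)
            (le_ciSup ((Set.finite_range _).bddAbove) (0 : Fin (J + 1)))
        · refine ciSup_le fun k => ?_
          rw [← happ k]
          exact le_ciSup ((Set.finite_range _).bddAbove) k.succ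
    -- transfer to product measure and Fubini
    have hsplit : ∀ (m : Measure ℝ) [IsProbabilityMeasure m],
        (∫ x : Fin (J + 1) → ℝ, U (⨆ j, x j) ∂(Measure.pi fun _ : Fin (J + 1) => m)) =
          ∫ y, ∫ x, F (y, x) ∂(Measure.pi fun _ : Fin J => m) ∂m := by
      intro m _
      have hmp := (measurePreserving_piFinSuccAbove (fun _ : Fin (J + 1) => m) 0).symm
      have h1 := hmp.integral_comp
        (MeasurableEquiv.piFinSuccAbove (fun _ : Fin (J + 1) => ℝ) 0).symm.measurableEmbedding
        (fun x : Fin (J + 1) → ℝ => U (⨆ j, x j))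
      rw [← h1]
      have h2 : ∀ p : ℝ × (Fin J → ℝ),
          U (⨆ j, ((MeasurableEquiv.piFinSuccAbove (fun _ : Fin (J + 1) => ℝ) 0).symm p) j)
            = F p := by
        rintro ⟨y, x⟩
        simp only [MeasurableEquiv.piFinSuccAbove_symm_apply, Fin.insertNthEquiv_apply]
        rw [hsup]
      simp_rw [h2]
      have hFi : Integrable F (m.prod (Measure.pi fun _ : Fin J => m)) :=
        (integrable_const C).mono' hFc.aestronglyMeasurable
          (Filter.Eventually.of_forall fun p => by
            simpa [Real.norm_eq_abs] using hFb p)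
      exact integral_prod F hFi
    -- integrability / continuity of slices
    have hFyi : ∀ (y : ℝ) (P : Measure (Fin J → ℝ)) [IsProbabilityMeasure P],
        Integrable (fun x => F (y, x)) P := by
      intro y P _
      exact (integrable_const C).mono'
        (hFc.comp (Continuous.prodMk_right y)).aestronglyMeasurable
        (Filter.Eventually.of_forall fun x => by simpa [Real.norm_eq_abs] using hFb (y, x))
    have hGc : ∀ (P : Measure (Fin J → ℝ)) [IsProbabilityMeasure P],
        Continuous fun y => ∫ x, F (y, x) ∂P := by
      intro P _
      apply continuous_of_dominated (bound := fun _ => C)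
      · intro y
        exact (hFc.comp (Continuous.prodMk_right y)).aestronglyMeasurable
      · intro y
        exact Filter.Eventually.of_forall fun x => by
          simpa [Real.norm_eq_abs] using hFb (y, x)
      · exact integrable_const C
      · exact Filter.Eventually.of_forall fun x =>
          hFc.comp (continuous_id.prodMk continuous_const)
    have hGb : ∀ (P : Measure (Fin J → ℝ)) [IsProbabilityMeasure P] (y : ℝ),
        |∫ x, F (y, x) ∂P| ≤ C := by
      intro P _ y
      calc |∫ x, F (y, x) ∂P| ≤ ∫ x, |F (y, x)| ∂P := by
            simpa [Real.norm_eq_abs] using norm_integral_le_integral_norm fun x => F (y, x)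
        _ ≤ ∫ _ : Fin J → ℝ, C ∂P := by
            refine integral_mono ((hFyi y P).abs) (integrable_const C) fun x => hFb (y, x)
        _ = C := by simp
    -- step 1: inner comparison via ih
    have hinner : ∀ y : ℝ,
        (∫ x, F (y, x) ∂(Measure.pi fun _ : Fin J => ν)) ≤
          ∫ x, F (y, x) ∂(Measure.pi fun _ : Fin J => μ) := by
      intro y
      have hUyc : Continuous fun t => U (max y t) :=
        hUc.comp (continuous_const.max continuous_id)
      have hUym : Monotone fun t => U (max y t) :=
        fun a b hab => hUm (max_le_max le_rfl hab)
      exact ih (fun t => U (max y t)) C hUyc hUym (convexOn_comp_max hUm hUcv y)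
        (fun t => hC _)
    -- step 2: convexity of y ↦ ∫ F(y,x) dμ^J
    set G : ℝ → ℝ := fun y => ∫ x, F (y, x) ∂(Measure.pi fun _ : Fin J => μ) with hG
    have hGcv : ConvexOn ℝ (Set.Icc 0 M) G := by
      refine ⟨convex_Icc _ _, fun y1 h1 y2 h2 a b ha hb hab => ?_⟩
      have pt : ∀ x : Fin J → ℝ,
          F (a • y1 + b • y2, x) ≤ a • F (y1, x) + b • F (y2, x) := by
        intro x
        have hcv := (convexOn_comp_max hUm hUcv (S x)).2 h1 h2 ha hb hab
        simpa [F, max_comm] using hcv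
      have ha1 : Integrable (fun x => a • F (y1, x)) (Measure.pi fun _ : Fin J => μ) :=
        (hFyi y1 _).smul a
      have hb1 : Integrable (fun x => b • F (y2, x)) (Measure.pi fun _ : Fin J => μ) :=
        (hFyi y2 _).smul b
      calc G (a • y1 + b • y2)
          ≤ ∫ x, (a • F (y1, x) + b • F (y2, x)) ∂(Measure.pi fun _ : Fin J => μ) :=
            integral_mono (hFyi _ _) (ha1.add hb1) pt
        _ = a • G y1 + b • G y2 := by
            rw [integral_add ha1 hb1, integral_smul, integral_smul]
    -- chain
    rw [hsplit ν, hsplit μ]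
    have hGνi : Integrable (fun y => ∫ x, F (y, x) ∂(Measure.pi fun _ : Fin J => ν)) ν :=
      (integrable_const C).mono' (hGc _).aestronglyMeasurable
        (Filter.Eventually.of_forall fun y => by
          simpa [Real.norm_eq_abs] using hGb (Measure.pi fun _ : Fin J => ν) y)
    have hGμi : Integrable G ν :=
      (integrable_const C).mono' (hGc _).aestronglyMeasurable
        (Filter.Eventually.of_forall fun y => by
          simpa [Real.norm_eq_abs] using hGb (Measure.pi fun _ : Fin J => μ) y)
    calc (∫ y, ∫ x, F (y, x) ∂(Measure.pi fun _ : Fin J => ν) ∂ν)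
        ≤ ∫ y, G y ∂ν := integral_mono hGνi hGμi hinner
      _ ≤ ∫ y, G y ∂μ := hcx G (hGc _).continuousOn hGcv

/-- If `μ` dominates `ν` in the convex order on `[0, M]`, then for
every `J ≥ 1` and every continuous nondecreasing convex `U : [0,M] → ℝ`, the
expectation of `U` at the highest of `J` i.i.d. draws is larger under `μ` than
under `ν`. -/
theorem stmt_6 (M : ℝ) (hM : 0 < M)
    (μ ν : Measure ℝ)
    [IsProbabilityMeasure μ] [IsProbabilityMeasure ν]
    (hμs : μ (Set.Icc 0 M)ᶜ = 0) (hνs : ν (Set.Icc 0 M)ᶜ = 0)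
    (hcx : ∀ φ : ℝ → ℝ, ContinuousOn φ (Set.Icc 0 M) →
      ConvexOn ℝ (Set.Icc 0 M) φ → (∫ x, φ x ∂ν) ≤ ∫ x, φ x ∂μ)
    (J : ℕ) (hJ : 1 ≤ J)
    (U : ℝ → ℝ) (hUc : ContinuousOn U (Set.Icc 0 M))
    (hUmono : MonotoneOn U (Set.Icc 0 M))
    (hUconv : ConvexOn ℝ (Set.Icc 0 M) U) :
    (∫ x : Fin J → ℝ, U (⨆ j, x j) ∂(Measure.pi fun _ : Fin J => ν)) ≤
      ∫ x : Fin J → ℝ, U (⨆ j, x j) ∂(Measure.pi fun _ : Fin J => μ) := by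
  set proj : ℝ → ℝ := fun t => min (max t 0) M with hproj
  have hprojm : Monotone proj := fun a b hab => min_le_min (max_le_max hab le_rfl) le_rfl
  have hmem : ∀ t, proj t ∈ Set.Icc 0 M := fun t =>
    ⟨le_min (le_max_right t 0) hM.le, min_le_right _ _⟩
  have hprojid : ∀ t ∈ Set.Icc 0 M, proj t = t := fun t ht => by
    simp [proj, max_eq_left ht.1, min_eq_left ht.2]
  have hprojc : Continuous proj := (continuous_id.max continuous_const).min continuous_const
  set V : ℝ → ℝ := fun t => U (proj t) with hV
  have hVc : Continuous V := hUc.comp_continuous hprojc hmem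
  have hVm : Monotone V := fun a b hab => hUmono (hmem a) (hmem b) (hprojm hab)
  have hVcv : ConvexOn ℝ (Set.Icc 0 M) V :=
    hUconv.congr fun t ht => (congrArg U (hprojid t ht)).symm
  set C := max |U 0| |U M| with hCdef
  have hVb : ∀ t, |V t| ≤ C := by
    intro t
    have h := hmem t
    have h1 : U 0 ≤ U (proj t) := hUmono ⟨le_rfl, hM.le⟩ h h.1
    have h2 : U (proj t) ≤ U M := hUmono h ⟨hM.le, le_rfl⟩ h.2
    rw [abs_le]
    constructor
    · have := neg_abs_le (U 0)
      have := le_max_left |U 0| |U M|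
      simp only [V, hCdef]
      nlinarith [neg_abs_le (U 0), le_max_left |U 0| |U M|]
    · simp only [V, hCdef]
      nlinarith [le_abs_self (U M), le_max_right |U 0| |U M|]
  have hkey := key hM μ ν hcx J hJ V C hVc hVm hVcv hVb
  have htrans : ∀ (m : Measure ℝ) [IsProbabilityMeasure m], m (Set.Icc 0 M)ᶜ = 0 →
      (∫ x : Fin J → ℝ, U (⨆ j, x j) ∂(Measure.pi fun _ : Fin J => m)) =
        ∫ x : Fin J → ℝ, V (⨆ j, x j) ∂(Measure.pi fun _ : Fin J => m) := by
    intro m _ hm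
    apply integral_congr_ae
    have hnull : (Measure.pi fun _ : Fin J => m) {x | ¬ ∀ j, x j ∈ Set.Icc 0 M} = 0 := by
      have hsub : {x : Fin J → ℝ | ¬ ∀ j, x j ∈ Set.Icc 0 M} ⊆
          ⋃ j, Function.eval j ⁻¹' (Set.Icc 0 M)ᶜ := by
        intro x hx
        push_neg at hx
        obtain ⟨j, hj⟩ := hx
        exact Set.mem_iUnion.2 ⟨j, hj⟩
      exact measure_mono_null hsub
        (measure_iUnion_null fun j => Measure.pi_eval_preimage_null (fun _ : Fin J => m) hm)
    have hae : ∀ᵐ x ∂(Measure.pi fun _ : Fin J => m), ∀ j, x j ∈ Set.Icc 0 M :=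
      ae_iff.2 hnull
    filter_upwards [hae] with x hx
    have hs := sup_mem_Icc hJ hx
    simp [V, hprojid _ hs]
  rw [htrans ν hνs, htrans μ hμs]
  exact hkey
end

section
/- Let q̂ > 0 and μ ∈ ℝ, and let x1 ≤ μ ≤ x2 with x2 = x1 + 2q̂. Set s = (x1 + μ)/2 and define π(θ) = θ²/2 − q̂·max{0, θ − μ} and the piecewise function y(θ) = θ²/2 for θ ≤ x1; y(θ) = x1²/2 + s·(θ − x1) for x1 ≤ θ ≤ x2; and y(θ) = θ²/2 − q̂·(θ − μ) for θ ≥ x2. Then: (i) y is convex on ℝ; (ii) y(θ) ≥ π(θ) for all θ, with y(θ) − π(θ) = (θ − x1)(μ − θ)/2 for θ ∈ [x1, μ], y(θ) − π(θ) = (θ − μ)(x2 − θ)/2 for θ ∈ [μ, x2], and y(θ) = π(θ) for θ ≤ x1, for θ ≥ x2, and at θ = μ; in particular {θ : y(θ) = π(θ)} = (−∞, x1] ∪ {μ} ∪ [x2, ∞). -/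
private lemma stmt9_auxA (qhat μ x1 x2 s : ℝ) (hq : 0 < qhat)
    (h1 : x1 ≤ μ) (h2 : μ ≤ x2) (hx2 : x2 = x1 + 2 * qhat)
    (hs : s = (x1 + μ) / 2) (a b : ℝ) (hab : a < b) :
    (if b ≤ x1 then b ^ 2 / 2 else if b ≤ x2 then x1 ^ 2 / 2 + s * (b - x1)
      else b ^ 2 / 2 - qhat * (b - μ)) -
    (if a ≤ x1 then a ^ 2 / 2 else if a ≤ x2 then x1 ^ 2 / 2 + s * (a - x1)
      else a ^ 2 / 2 - qhat * (a - μ)) ≤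
    (if b ≤ x1 then b else if b ≤ x2 then s else b - qhat) * (b - a) := by
  subst hx2; subst hs
  split_ifs <;>
    first
      | linarith
      | nlinarith [sq_nonneg (b - a), sq_nonneg (b - x1 - 2 * qhat),
          sq_nonneg (x1 - a), sq_nonneg (b - x1), sq_nonneg (b - a - 2 * qhat),
          mul_pos hq hq, sq_nonneg (b - μ), sq_nonneg (a - μ),
          sq_nonneg (b + a - 2 * x1 - 2 * qhat)]

private lemma stmt9_auxB (qhat μ x1 x2 s : ℝ) (hq : 0 < qhat)
    (h1 : x1 ≤ μ) (h2 : μ ≤ x2) (hx2 : x2 = x1 + 2 * qhat)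
    (hs : s = (x1 + μ) / 2) (a b : ℝ) (hab : a < b) :
    (if a ≤ x1 then a else if a ≤ x2 then s else a - qhat) * (b - a) ≤
    (if b ≤ x1 then b ^ 2 / 2 else if b ≤ x2 then x1 ^ 2 / 2 + s * (b - x1)
      else b ^ 2 / 2 - qhat * (b - μ)) -
    (if a ≤ x1 then a ^ 2 / 2 else if a ≤ x2 then x1 ^ 2 / 2 + s * (a - x1)
      else a ^ 2 / 2 - qhat * (a - μ)) := by
  subst hx2; subst hs
  split_ifs <;>
    first
      | linarith
      | nlinarith [sq_nonneg (b - a), sq_nonneg (b - x1 - 2 * qhat),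
          sq_nonneg (x1 - a), sq_nonneg (b - x1), sq_nonneg (b - a - 2 * qhat),
          mul_pos hq hq, sq_nonneg (b - μ), sq_nonneg (a - μ),
          sq_nonneg (b + a - 2 * x1 - 2 * qhat)]

/-- The piecewise function `y` with slope `s = (x1+μ)/2` on the
middle piece is convex, dominates the on-platform profit
`π(θ) = θ²/2 − q̂·max{0, θ−μ}`, the gaps on `[x1,μ]` and `[μ,x2]` are
`(θ−x1)(μ−θ)/2` and `(θ−μ)(x2−θ)/2` respectively, and the contact set is
exactly `(−∞, x1] ∪ {μ} ∪ [x2, ∞)`. -/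
theorem stmt_9 (qhat μ x1 x2 s : ℝ) (hq : 0 < qhat)
    (h1 : x1 ≤ μ) (h2 : μ ≤ x2) (hx2 : x2 = x1 + 2 * qhat)
    (hs : s = (x1 + μ) / 2)
    (π y : ℝ → ℝ)
    (hπ : ∀ θ, π θ = θ ^ 2 / 2 - qhat * max 0 (θ - μ))
    (hy : ∀ θ, y θ = if θ ≤ x1 then θ ^ 2 / 2
      else if θ ≤ x2 then x1 ^ 2 / 2 + s * (θ - x1)
      else θ ^ 2 / 2 - qhat * (θ - μ)) :
    ConvexOn ℝ Set.univ y ∧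
    (∀ θ, π θ ≤ y θ) ∧
    (∀ θ ∈ Set.Icc x1 μ, y θ - π θ = (θ - x1) * (μ - θ) / 2) ∧
    (∀ θ ∈ Set.Icc μ x2, y θ - π θ = (θ - μ) * (x2 - θ) / 2) ∧
    (∀ θ ≤ x1, y θ = π θ) ∧
    (∀ θ, x2 ≤ θ → y θ = π θ) ∧
    (y μ = π μ) ∧
    {θ : ℝ | y θ = π θ} = Set.Iic x1 ∪ {μ} ∪ Set.Ici x2 := by
  -- convexity
  have hconv : ConvexOn ℝ Set.univ y := by
    apply convexOn_of_slope_mono_adjacent convex_univ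
    intro a b c _ _ hab hbc
    have hA := stmt9_auxA qhat μ x1 x2 s hq h1 h2 hx2 hs a b hab
    have hB := stmt9_auxB qhat μ x1 x2 s hq h1 h2 hx2 hs b c hbc
    rw [hy a, hy b, hy c]
    rw [div_le_div_iff₀ (by linarith) (by linarith)]
    nlinarith [mul_le_mul_of_nonneg_right hA (by linarith : (0:ℝ) ≤ c - b),
      mul_le_mul_of_nonneg_right hB (by linarith : (0:ℝ) ≤ b - a)]
  -- gap on [x1, μ]
  have hgap1 : ∀ θ ∈ Set.Icc x1 μ, y θ - π θ = (θ - x1) * (μ - θ) / 2 := by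
    rintro θ ⟨hθ1, hθ2⟩
    rw [hy, hπ, max_eq_left (by linarith)]
    split_ifs with h h'
    · have hθ : θ = x1 := le_antisymm h hθ1
      subst hθ; ring
    · subst hs; ring
    · linarith
  -- gap on [μ, x2]
  have hgap2 : ∀ θ ∈ Set.Icc μ x2, y θ - π θ = (θ - μ) * (x2 - θ) / 2 := by
    rintro θ ⟨hθ1, hθ2⟩
    rw [hy, hπ, max_eq_right (by linarith)]
    split_ifs with h h'
    · have hθμ : θ = μ := le_antisymm (by linarith) hθ1
      subst hθμ; ring
    · subst hs; subst hx2; ring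
  -- equality left
  have hleft : ∀ θ ≤ x1, y θ = π θ := by
    intro θ hθ
    rw [hy, hπ, max_eq_left (by linarith), if_pos hθ]
    ring
  -- equality right
  have hright : ∀ θ, x2 ≤ θ → y θ = π θ := by
    intro θ hθ
    rw [hy, hπ, max_eq_right (by linarith)]
    split_ifs with h h'
    · linarith
    · have hθ2 : θ = x2 := le_antisymm h' hθ
      subst hθ2; subst hs; subst hx2; ring
    · ring
  -- equality at μ
  have hmu : y μ = π μ := by
    linarith [hgap1 μ ⟨h1, le_refl μ⟩]
  -- domination
  have hdom : ∀ θ, π θ ≤ y θ := by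
    intro θ
    rcases le_or_gt θ x1 with h | h
    · exact (hleft θ h).ge
    rcases le_or_gt θ μ with h' | h'
    · have := hgap1 θ ⟨le_of_lt h, h'⟩
      nlinarith
    rcases le_or_gt θ x2 with h'' | h''
    · have := hgap2 θ ⟨le_of_lt h', h''⟩
      nlinarith
    · exact (hright θ (le_of_lt h'')).ge
  refine ⟨hconv, hdom, hgap1, hgap2, hleft, hright, hmu, ?_⟩
  ext θ
  simp only [Set.mem_setOf_eq, Set.mem_union, Set.mem_Iic, Set.mem_Ici,
    Set.mem_singleton_iff]
  constructor
  · intro heq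
    by_contra hcon
    push_neg at hcon
    obtain ⟨⟨hc1, hc2⟩, hc3⟩ := hcon
    rcases le_or_gt θ μ with h' | h'
    · have := hgap1 θ ⟨le_of_lt hc1, h'⟩
      have hθμ : θ < μ := lt_of_le_of_ne h' hc2
      nlinarith
    · have := hgap2 θ ⟨le_of_lt h', le_of_lt hc3⟩
      nlinarith
  · rintro ((h | h) | h)
    · exact hleft θ h
    · subst h; exact hmu
    · exact hright θ h
end

section
/- Let H be the CDF of an atomless Borel probability measure on [0, M], let q̂ > 0 and μ ∈ (0, M). For s ∈ ℝ set x1(s) = 2s − μ and x2(s) = 2s − μ + 2q̂, and let y_s(θ) = θ²/2 for θ ≤ x1(s), y_s(θ) = x1(s)²/2 + s·(θ − x1(s)) for x1(s) ≤ θ ≤ x2(s), and y_s(θ) = θ²/2 − q̂·(θ − μ) for θ ≥ x2(s). Then the function S(s) = ∫_{[0,M]} y_s(θ) dH(θ) is differentiable, with S′(s) = ∫_{[x1(s), x2(s)] ∩ [0,M]} (θ − μ) dH(θ). Consequently, any interior minimizer s of S satisfies ∫_{x1(s)}^{x2(s)} (θ − μ) dH(θ) = 0. -/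
open MeasureTheory

/-!
After substituting `x1`, `x2`, the supporting function becomes
`y_s(θ) = μ²/2 + (θ - μ) · c_θ(s)`, where `c_θ(s)` is `s` clamped to
`[(θ + μ)/2 - q̂, (θ + μ)/2]`. For fixed `θ` this is Lipschitz in `s` with constant `|θ - μ|`
and differentiable with derivative `(θ - μ) · 1[x1(s) ≤ θ ≤ x2(s)]` except at the two kinks
`θ = x1(s)`, `θ = x2(s)`, which are `ρ`-null because `ρ` has no atoms. Differentiating under the
integral sign, dominated by `|θ - μ|` (integrable as `ρ` lives on `[0, M]`), gives `S'`, and a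
local minimizer is a critical point.
-/

lemma hasDerivAt_max_min_const {a b s : ℝ} (ha : s ≠ a) (hb : s ≠ b) :
    HasDerivAt (fun t => max (min t b) a) ((Set.Icc a b).indicator 1 s) s := by
  rcases ha.lt_or_gt with has | has
  · rw [Set.indicator_of_notMem fun h => (h.1.trans_lt has).false]
    refine (hasDerivAt_const s a).congr_of_eventuallyEq ?_
    filter_upwards [Iio_mem_nhds has] with t ht
    exact max_eq_right ((min_le_left t b).trans ht.le)
  rcases hb.lt_or_gt with hsb | hsb
  · rw [Set.indicator_of_mem (Set.mem_Icc.2 ⟨has.le, hsb.le⟩)]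
    refine (hasDerivAt_id s).congr_of_eventuallyEq ?_
    filter_upwards [Ioo_mem_nhds has hsb] with t ht
    rw [min_eq_left ht.2.le, max_eq_left ht.1.le]; rfl
  · rw [Set.indicator_of_notMem fun h => (h.2.trans_lt hsb).false]
    refine (hasDerivAt_const s (max b a)).congr_of_eventuallyEq ?_
    filter_upwards [Ioi_mem_nhds hsb] with t ht
    rw [min_eq_right ht.le]

lemma lipschitzWith_mul_max_min_const (c a b : ℝ) :
    LipschitzWith (Real.nnabs c) (fun t : ℝ => c * max (min t b) a) := by
  have hc : Real.nnabs c = ‖c‖₊ * 1 := by ext; simp [Real.coe_nnabs]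
  rw [hc]
  exact (lipschitzWith_smul c).comp ((LipschitzWith.id.min_const b).max_const a)

theorem hasDerivAt_integral_mul_max_min {α : Type*} [MeasurableSpace α] {ρ : Measure α}
    {a b c : α → ℝ} (ha : Measurable a) (hb : Measurable b) (hc : Integrable c ρ) {s : ℝ}
    (hs : Integrable (fun θ => c θ * max (min s (b θ)) (a θ)) ρ)
    (has : ∀ᵐ θ ∂ρ, a θ ≠ s) (hbs : ∀ᵐ θ ∂ρ, b θ ≠ s) :
    HasDerivAt (fun t => ∫ θ, c θ * max (min t (b θ)) (a θ) ∂ρ)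
      (∫ θ in {θ | s ∈ Set.Icc (a θ) (b θ)}, c θ ∂ρ) s := by
  have hI : MeasurableSet {θ | s ∈ Set.Icc (a θ) (b θ)} :=
    (measurableSet_le ha measurable_const).inter (measurableSet_le measurable_const hb)
  rw [← integral_indicator hI]
  refine (hasDerivAt_integral_of_dominated_loc_of_lip
    (F := fun t θ => c θ * max (min t (b θ)) (a θ)) Filter.univ_mem
    (.of_forall fun t => hc.aestronglyMeasurable.mul
      ((measurable_const.min hb).max ha).aestronglyMeasurable)
    hs (hc.aestronglyMeasurable.indicator hI)
    (.of_forall fun θ => (lipschitzWith_mul_max_min_const _ _ _).lipschitzOnWith) hc ?_).2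
  filter_upwards [has, hbs] with θ haθ hbθ
  refine ((hasDerivAt_max_min_const haθ.symm hbθ.symm).const_mul (c θ)).congr_deriv ?_
  simp only [Set.indicator_apply, Set.mem_ofPred_eq, Pi.one_apply]
  split_ifs <;> ring

lemma piecewise_eq_mul_max_min {q : ℝ} (hq : 0 ≤ q) (μ s θ : ℝ) :
    (if θ ≤ 2 * s - μ then θ ^ 2 / 2
      else if θ ≤ 2 * s - μ + 2 * q then (2 * s - μ) ^ 2 / 2 + s * (θ - (2 * s - μ))
      else θ ^ 2 / 2 - q * (θ - μ))
      = μ ^ 2 / 2 + (θ - μ) * max (min s ((θ + μ) / 2)) ((θ + μ) / 2 - q) := by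
  split_ifs with h₁ h₂
  · rw [min_eq_right (by linarith), max_eq_left (by linarith)]; ring
  · rw [min_eq_left (by linarith), max_eq_left (by linarith)]; ring
  · rw [min_eq_left (by linarith), max_eq_right (by linarith)]; ring

lemma setOf_mem_Icc_half_eq_Icc (q μ s : ℝ) :
    {θ | s ∈ Set.Icc ((θ + μ) / 2 - q) ((θ + μ) / 2)}
      = Set.Icc (2 * s - μ) (2 * s - μ + 2 * q) := by
  ext θ
  simp only [Set.mem_ofPred_eq, Set.mem_Icc]
  constructor <;> rintro ⟨h₁, h₂⟩ <;> constructor <;> linarith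

lemma Continuous.integrable_of_ae_mem_compact {α E : Type*} [TopologicalSpace α] [T2Space α]
    [MeasurableSpace α] [OpensMeasurableSpace α] [NormedAddCommGroup E] {ρ : Measure α}
    [IsFiniteMeasureOnCompacts ρ] {K : Set α} (hK : IsCompact K) (hρK : ∀ᵐ x ∂ρ, x ∈ K)
    {f : α → E} (hf : Continuous f) : Integrable f ρ := by
  rw [← Measure.restrict_eq_self_of_ae_mem hρK]
  exact hf.continuousOn.integrableOn_compact hK

theorem stmt_10_general (M : ℝ)
    (ρ : Measure ℝ) [IsProbabilityMeasure ρ]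
    (hρs : ρ (Set.Icc 0 M)ᶜ = 0) (hatomless : ∀ x : ℝ, ρ {x} = 0)
    (qhat μ : ℝ) (hq : 0 < qhat)
    (x1 x2 : ℝ → ℝ)
    (hx1 : ∀ s, x1 s = 2 * s - μ)
    (hx2 : ∀ s, x2 s = 2 * s - μ + 2 * qhat)
    (y : ℝ → ℝ → ℝ)
    (hy : ∀ s θ, y s θ = if θ ≤ x1 s then θ ^ 2 / 2
      else if θ ≤ x2 s then (x1 s) ^ 2 / 2 + s * (θ - x1 s)
      else θ ^ 2 / 2 - qhat * (θ - μ))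
    (S : ℝ → ℝ) (hS : ∀ s, S s = ∫ θ, y s θ ∂ρ) :
    (∀ s, HasDerivAt S
      (∫ θ in Set.Icc (x1 s) (x2 s) ∩ Set.Icc 0 M, (θ - μ) ∂ρ) s) ∧
    (∀ s, IsLocalMin S s → (∫ θ in Set.Icc (x1 s) (x2 s), (θ - μ) ∂ρ) = 0) := by
  have hsupp : ∀ᵐ θ ∂ρ, θ ∈ Set.Icc 0 M :=
    (measure_eq_zero_iff_ae_notMem.1 hρs).mono fun _ => Set.notMem_compl_iff.1
  have hnoatom (c : ℝ) : ∀ᵐ θ ∂ρ, θ ≠ c := measure_eq_zero_iff_ae_notMem.1 (hatomless c)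
  have hint (s : ℝ) :
      Integrable (fun θ => (θ - μ) * max (min s ((θ + μ) / 2)) ((θ + μ) / 2 - qhat)) ρ :=
    Continuous.integrable_of_ae_mem_compact isCompact_Icc hsupp (by fun_prop)
  have hSeq : S = fun s =>
      μ ^ 2 / 2 + ∫ θ, (θ - μ) * max (min s ((θ + μ) / 2)) ((θ + μ) / 2 - qhat) ∂ρ := by
    funext s
    simp_rw [hS, hy, hx1, hx2, piecewise_eq_mul_max_min hq.le]
    rw [integral_add (integrable_const _) (hint s), integral_const, probReal_univ, one_smul]
  have hderiv (s : ℝ) : HasDerivAt S (∫ θ in Set.Icc (x1 s) (x2 s), (θ - μ) ∂ρ) s := by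
    rw [hSeq, hx1, hx2, ← setOf_mem_Icc_half_eq_Icc]
    refine (hasDerivAt_integral_mul_max_min (by fun_prop) (by fun_prop)
      (Continuous.integrable_of_ae_mem_compact isCompact_Icc hsupp (by fun_prop)) (hint s)
      ?_ ?_).const_add _
    · filter_upwards [hnoatom (x2 s)] with θ hθ h
      exact hθ (by linarith [hx2 s])
    · filter_upwards [hnoatom (x1 s)] with θ hθ h
      exact hθ (by linarith [hx1 s])
  have hrestrict (s : ℝ) : ∫ θ in Set.Icc (x1 s) (x2 s) ∩ Set.Icc 0 M, (θ - μ) ∂ρ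
      = ∫ θ in Set.Icc (x1 s) (x2 s), (θ - μ) ∂ρ := by
    rw [← Measure.restrict_restrict measurableSet_Icc, Measure.restrict_eq_self_of_ae_mem hsupp]
  exact ⟨fun s => hrestrict s ▸ hderiv s, fun s hs => hs.hasDerivAt_eq_zero (hderiv s)⟩

/-- With `H` the CDF of an atomless Borel probability measure `ρ`
on `[0,M]`, `x1(s) = 2s−μ`, `x2(s) = 2s−μ+2q̂`, and the convex supporting
function `y_s`, the map `S(s) = ∫ y_s dρ` is differentiable with
`S′(s) = ∫_{[x1(s),x2(s)] ∩ [0,M]} (θ−μ) dρ`; hence any interior (local)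
minimizer `s` satisfies `∫_{x1(s)}^{x2(s)} (θ−μ) dρ = 0`. -/
theorem stmt_10 (M : ℝ) (hM : 0 < M)
    (ρ : Measure ℝ) [IsProbabilityMeasure ρ]
    (hρs : ρ (Set.Icc 0 M)ᶜ = 0) (hatomless : ∀ x : ℝ, ρ {x} = 0)
    (H : ℝ → ℝ) (hH : ∀ v, H v = (ρ (Set.Iic v)).toReal)
    (qhat μ : ℝ) (hq : 0 < qhat) (hμ : μ ∈ Set.Ioo 0 M)
    (x1 x2 : ℝ → ℝ)
    (hx1 : ∀ s, x1 s = 2 * s - μ)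
    (hx2 : ∀ s, x2 s = 2 * s - μ + 2 * qhat)
    (y : ℝ → ℝ → ℝ)
    (hy : ∀ s θ, y s θ = if θ ≤ x1 s then θ ^ 2 / 2
      else if θ ≤ x2 s then (x1 s) ^ 2 / 2 + s * (θ - x1 s)
      else θ ^ 2 / 2 - qhat * (θ - μ))
    (S : ℝ → ℝ) (hS : ∀ s, S s = ∫ θ, y s θ ∂ρ) :
    (∀ s, HasDerivAt S
      (∫ θ in Set.Icc (x1 s) (x2 s) ∩ Set.Icc 0 M, (θ - μ) ∂ρ) s) ∧
    (∀ s, IsLocalMin S s → (∫ θ in Set.Icc (x1 s) (x2 s), (θ - μ) ∂ρ) = 0) :=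
  stmt_10_general M ρ hρs hatomless qhat μ hq x1 x2 hx1 hx2 y hy S hS
end

section
/- Let H be a CDF on [θL, θH] with continuous density h > 0 on (θL, θH), let μ ∈ (θL, θH) and q̂ > 0, and suppose [μ − 2q̂, μ + 2q̂] ⊆ [θL, θH]. Then there exists a unique x1 ∈ (μ − 2q̂, μ) such that ∫_{x1}^{x1 + 2q̂} (θ − μ)·h(θ) dθ = 0. Equivalently, there is a unique pair (x1, x2) with x1 ≤ μ ≤ x2, x2 = x1 + 2q̂, and E_H[θ | x1 ≤ θ ≤ x2] = μ. -/
/-!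
Put `g θ = (θ - μ) h θ`, `a = μ`, `c = 2q̂` and `F x = ∫_x^{x+c} g`. Then `g < 0` on `(a - c, a)` and
`g > 0` on `(a, a + c)`, so `F (a - c) < 0 < F a`, and `F` is strictly increasing on `[a - c, a]`:
sliding the window to the right drops mass where `g < 0` and adds mass where `g > 0`.
The intermediate value theorem gives a zero, strict monotonicity its uniqueness.
-/

open Set intervalIntegral MeasureTheory

theorem intervalIntegral_neg_of_neg_on {f : ℝ → ℝ} {a b : ℝ}
    (hfi : IntervalIntegrable f volume a b) (hneg : ∀ x ∈ Ioo a b, f x < 0) (hab : a < b) :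
    ∫ x in a..b, f x < 0 := by
  have := intervalIntegral_pos_of_pos_on hfi.neg (fun x hx => neg_pos.2 (hneg x hx)) hab
  simpa only [Pi.neg_apply, intervalIntegral.integral_neg, neg_pos] using this

theorem ContinuousOn.intervalIntegrable_of_mem_Icc {f : ℝ → ℝ} {l r u v : ℝ}
    (hf : ContinuousOn f (Icc l r)) (hu : u ∈ Icc l r) (hv : v ∈ Icc l r) :
    IntervalIntegrable f volume u v :=
  (hf.mono (uIcc_subset_Icc hu hv)).intervalIntegrable

section WindowIntegral

variable {g : ℝ → ℝ} {a c : ℝ}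

theorem continuousOn_integral_window (hc : 0 ≤ c) (hg : ContinuousOn g (Icc (a - c) (a + c))) :
    ContinuousOn (fun x => ∫ t in x..x + c, g t) (Icc (a - c) a) := by
  have hprim : ContinuousOn (fun b => ∫ t in a - c..b, g t) (Icc (a - c) (a + c)) := by
    have := continuousOn_primitive_interval (μ := volume)
      (hg.integrableOn_compact isCompact_Icc |>.mono_set (uIcc_of_le (by linarith)).subset)
    rwa [uIcc_of_le (by linarith)] at this
  have hshift : MapsTo (· + c) (Icc (a - c) a) (Icc (a - c) (a + c)) :=
    fun x hx => ⟨by linarith [hx.1], by linarith [hx.2]⟩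
  have hincl : Icc (a - c) a ⊆ Icc (a - c) (a + c) := Icc_subset_Icc_right (by linarith)
  refine ((hprim.comp (continuousOn_id.add continuousOn_const) hshift).sub
    (hprim.mono hincl)).congr fun x hx => ?_
  have hleft : a - c ∈ Icc (a - c) (a + c) := left_mem_Icc.2 (by linarith)
  exact (integral_interval_sub_left (hg.intervalIntegrable_of_mem_Icc hleft (hshift hx))
    (hg.intervalIntegrable_of_mem_Icc hleft (hincl hx))).symm

variable (hg : ContinuousOn g (Icc (a - c) (a + c)))
  (hneg : ∀ x ∈ Ioo (a - c) a, g x < 0) (hpos : ∀ x ∈ Ioo a (a + c), 0 < g x)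
include hg hneg hpos

theorem strictMonoOn_integral_window :
    StrictMonoOn (fun x => ∫ t in x..x + c, g t) (Icc (a - c) a) := by
  intro x hx y hy hxy
  have hc : 0 < c := by linarith [hx.1, hy.2]
  have hI : ∀ u ∈ Icc (a - c) (a + c), ∀ v ∈ Icc (a - c) (a + c),
      IntervalIntegrable g volume u v := fun u hu v hv => hg.intervalIntegrable_of_mem_Icc hu hv
  have hx' : x ∈ Icc (a - c) (a + c) := ⟨hx.1, by linarith [hx.2]⟩
  have hy' : y ∈ Icc (a - c) (a + c) := ⟨hy.1, by linarith [hy.2]⟩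
  have hxc : x + c ∈ Icc (a - c) (a + c) := ⟨by linarith [hx.1], by linarith [hx.2]⟩
  have hyc : y + c ∈ Icc (a - c) (a + c) := ⟨by linarith [hy.1], by linarith [hy.2]⟩
  have hgain : 0 < ∫ t in x + c..y + c, g t :=
    intervalIntegral_pos_of_pos_on (hI _ hxc _ hyc)
      (fun t ht => hpos t ⟨by linarith [ht.1, hx.1], by linarith [ht.2, hy.2]⟩) (by linarith)
  have hloss : ∫ t in x..y, g t < 0 :=
    intervalIntegral_neg_of_neg_on (hI _ hx' _ hy')
      (fun t ht => hneg t ⟨by linarith [ht.1, hx.1], by linarith [ht.2, hy.2]⟩) hxy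
  have hdiff := integral_interval_sub_interval_comm' (hI _ hy' _ hyc) (hI _ hx' _ hxc) (hI _ hy' _ hx')
  linarith

theorem existsUnique_integral_window_eq_zero (hc : 0 < c) :
    ∃! x, x ∈ Ioo (a - c) a ∧ ∫ t in x..x + c, g t = 0 := by
  have hleft : ∫ t in a - c..a - c + c, g t < 0 := by
    rw [sub_add_cancel]
    exact intervalIntegral_neg_of_neg_on
      (hg.intervalIntegrable_of_mem_Icc ⟨le_rfl, by linarith⟩ ⟨by linarith, by linarith⟩) hneg
      (by linarith)
  have hright : 0 < ∫ t in a..a + c, g t :=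
    intervalIntegral_pos_of_pos_on
      (hg.intervalIntegrable_of_mem_Icc ⟨by linarith, by linarith⟩ ⟨by linarith, le_rfl⟩) hpos
      (by linarith)
  obtain ⟨x, hx, hx0⟩ := intermediate_value_Ioo (by linarith : a - c ≤ a)
    (continuousOn_integral_window hc.le hg) ⟨hleft, hright⟩
  refine ⟨x, ⟨hx, hx0⟩, fun y ⟨hy, hy0⟩ => ?_⟩
  exact (strictMonoOn_integral_window hg hneg hpos).injOn (Ioo_subset_Icc_self hy)
    (Ioo_subset_Icc_self hx) (hy0.trans hx0.symm)

end WindowIntegral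

theorem stmt_11_general (θL θH μ qhat : ℝ)
    (h : ℝ → ℝ) (hcont : ContinuousOn h (Set.Icc θL θH))
    (hpos : ∀ θ ∈ Set.Ioo θL θH, 0 < h θ)
    (hq : 0 < qhat)
    (hsub : Set.Icc (μ - 2 * qhat) (μ + 2 * qhat) ⊆ Set.Icc θL θH) :
    ∃! x1 : ℝ, x1 ∈ Set.Ioo (μ - 2 * qhat) μ ∧
      (∫ θ in x1..(x1 + 2 * qhat), (θ - μ) * h θ) = 0 := by
  have hinner : Ioo (μ - 2 * qhat) (μ + 2 * qhat) ⊆ Ioo θL θH := by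
    simpa only [interior_Icc] using interior_mono hsub
  refine existsUnique_integral_window_eq_zero
    ((continuousOn_id.sub continuousOn_const).mul (hcont.mono hsub)) (fun θ hθ => ?_)
    (fun θ hθ => ?_) (by linarith)
  · exact mul_neg_of_neg_of_pos (sub_neg.2 hθ.2)
      (hpos θ (hinner ⟨hθ.1, by linarith [hθ.2]⟩))
  · exact mul_pos (sub_pos.2 hθ.1) (hpos θ (hinner ⟨by linarith [hθ.1], hθ.2⟩))

/-- With a continuous density `h > 0` on `(θL, θH)`,
`μ ∈ (θL, θH)`, `q̂ > 0` and `[μ−2q̂, μ+2q̂] ⊆ [θL, θH]`, there is a unique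
`x1 ∈ (μ−2q̂, μ)` with `∫_{x1}^{x1+2q̂} (θ−μ)·h(θ) dθ = 0`, i.e. a unique pair
`(x1, x2)` with `x2 = x1 + 2q̂` and conditional mean `μ` on `[x1, x2]`. -/
theorem stmt_11 (θL θH μ qhat : ℝ) (hθ : θL < θH)
    (h : ℝ → ℝ) (hcont : ContinuousOn h (Set.Icc θL θH))
    (hpos : ∀ θ ∈ Set.Ioo θL θH, 0 < h θ)
    (hμ : μ ∈ Set.Ioo θL θH) (hq : 0 < qhat)
    (hsub : Set.Icc (μ - 2 * qhat) (μ + 2 * qhat) ⊆ Set.Icc θL θH) :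
    ∃! x1 : ℝ, x1 ∈ Set.Ioo (μ - 2 * qhat) μ ∧
      (∫ θ in x1..(x1 + 2 * qhat), (θ - μ) * h θ) = 0 :=
  stmt_11_general θL θH μ qhat h hcont hpos hq hsub
end

section
/- Let H be a continuous CDF of a Borel probability measure on [0, M], and let 0 ≤ x1 ≤ μ ≤ x2 ≤ M satisfy ∫_{x1}^{x2} (θ − μ) dH(θ) = 0. Define Ĥ(θ) = H(θ) for θ < x1; Ĥ(θ) = H(x1) for x1 ≤ θ < μ; Ĥ(θ) = H(x2) for μ ≤ θ < x2; and Ĥ(θ) = H(θ) for θ ≥ x2. Then Ĥ is the CDF of a Borel probability measure on [0, M], and H is a mean-preserving spread of Ĥ; that is, ∫_v^M H(t) dt ≤ ∫_v^M Ĥ(t) dt for every v ∈ [0, M], with equality at v = 0. -/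
/-!
`Ĥ` is the CDF of the measure obtained from `ρ` by moving the mass of `(x1, x2]` to the point `μ`.
The difference `Ĥ - H` vanishes outside `[x1, x2]`, is `≤ 0` left of `μ` and `≥ 0` right of it,
and has integral zero: by Fubini, `∫_{x1}^{x2} (H x2 - H t) dt = ∫_{(x1, x2]} (θ - x1) dρ`, and
since continuity of `H` rules out an atom at `x1`, the barycentre condition evaluates the right
side as `(μ - x1) (H x2 - H x1) = ∫_{x1}^{x2} (H x2 - Ĥ t) dt`. A function with a single sign
change from `-` to `+` and total integral zero has nonnegative tail integrals.
-/

open MeasureTheory Set ProbabilityTheory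

theorem StieltjesFunction.integral_sub_eq_integral_Ioc_sub (f : StieltjesFunction ℝ) {a b : ℝ}
    (hab : a ≤ b) : ∫ t in a..b, (f b - f t) = ∫ θ in Ioc a b, (θ - a) ∂f.measure := by
  have hS : MeasurableSet {p : ℝ × ℝ | p.1 < p.2} := measurableSet_lt measurable_fst measurable_snd
  set κ := (volume.restrict (Ioc a b)).prod (f.measure.restrict (Ioc a b))
  have hleft : κ {p | p.1 < p.2} = ∫⁻ t in Ioc a b, ENNReal.ofReal (f b - f t) := by
    rw [Measure.prod_apply hS]
    refine setLIntegral_congr_fun measurableSet_Ioc fun t ht => ?_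
    change f.measure.restrict (Ioc a b) (Ioi t) = _
    have hset : Ioi t ∩ Ioc a b = Ioc t b := by
      ext x; grind
    rw [Measure.restrict_apply _root_.measurableSet_Ioi, hset, f.measure_Ioc]
  have hright : κ {p | p.1 < p.2} = ∫⁻ θ in Ioc a b, ENNReal.ofReal (θ - a) ∂f.measure := by
    rw [Measure.prod_apply_symm hS]
    refine setLIntegral_congr_fun measurableSet_Ioc fun θ hθ => ?_
    change volume.restrict (Ioc a b) (Iio θ) = _
    have hset : Iio θ ∩ Ioc a b = Ioo a θ := by
      ext x; grind
    rw [Measure.restrict_apply _root_.measurableSet_Iio, hset, Real.volume_Ioo]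
  rw [intervalIntegral.integral_of_le hab,
    integral_eq_lintegral_of_nonneg_ae, integral_eq_lintegral_of_nonneg_ae, ← hleft, ← hright]
  · exact ae_restrict_of_forall_mem measurableSet_Ioc fun θ hθ => sub_nonneg.2 hθ.1.le
  · fun_prop
  · exact ae_restrict_of_forall_mem measurableSet_Ioc fun t ht => sub_nonneg.2 (f.mono ht.2)
  · exact (measurable_const.sub f.mono.measurable).aestronglyMeasurable

theorem measure_singleton_eq_zero_of_continuousAt_cdf (ρ : Measure ℝ) [IsProbabilityMeasure ρ]
    {a : ℝ} (ha : ContinuousAt (cdf ρ) a) : ρ {a} = 0 := by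
  rw [← measure_cdf ρ, StieltjesFunction.measure_singleton,
    ha.continuousWithinAt.leftLim_eq, sub_self, ENNReal.ofReal_zero]

theorem intervalIntegral_eq_mul_of_forall_Ioo {f : ℝ → ℝ} {a b c : ℝ} (hab : a ≤ b)
    (h : ∀ t ∈ Ioo a b, f t = c) : ∫ t in a..b, f t = (b - a) * c := by
  rw [intervalIntegral.integral_of_le hab, integral_Ioc_eq_integral_Ioo,
    setIntegral_congr_fun measurableSet_Ioo h, setIntegral_const, smul_eq_mul,
    Real.volume_real_Ioo_of_le hab]

theorem intervalIntegral_nonneg_of_forall_Ioo {f : ℝ → ℝ} {a b : ℝ} (hab : a ≤ b)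
    (h : ∀ t ∈ Ioo a b, 0 ≤ f t) : 0 ≤ ∫ t in a..b, f t := by
  rw [intervalIntegral.integral_of_le hab, integral_Ioc_eq_integral_Ioo]
  exact setIntegral_nonneg measurableSet_Ioo h

theorem intervalIntegral_tail_nonneg_of_single_crossing {g : ℝ → ℝ} {a b c v : ℝ}
    (hg : IntervalIntegrable g volume a b) (hneg : ∀ t < c, g t ≤ 0) (hpos : ∀ t, c < t → 0 ≤ g t)
    (hzero : ∫ t in a..b, g t = 0) (hv : v ∈ Icc a b) : 0 ≤ ∫ t in v..b, g t := by
  rcases le_total v c with hvc | hcv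
  · have hsplit := intervalIntegral.integral_add_adjacent_intervals
      (hg.mono_set (uIcc_subset_uIcc_left (Icc_subset_uIcc hv)))
      (hg.mono_set (uIcc_subset_uIcc_right (Icc_subset_uIcc hv)))
    have hhead : 0 ≤ ∫ t in a..v, -g t := intervalIntegral_nonneg_of_forall_Ioo hv.1
      fun t ht => neg_nonneg.2 (hneg t (ht.2.trans_le hvc))
    rw [intervalIntegral.integral_neg] at hhead
    linarith
  · exact intervalIntegral_nonneg_of_forall_Ioo hv.2 fun t ht => hpos t (hcv.trans_lt ht.1)

noncomputable def pool (F : ℝ → ℝ) (a m b : ℝ) (t : ℝ) : ℝ :=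
  if t < a then F t else if t < m then F a else if t < b then F b else F t

section pool

variable {F : ℝ → ℝ} {a m b t : ℝ}

theorem pool_of_lt (ht : t < a) : pool F a m b t = F t := if_pos ht

theorem pool_of_le (hmb : m ≤ b) (ht : b ≤ t) : pool F a m b t = F t := by
  unfold pool; split_ifs <;> first | rfl | linarith

theorem pool_of_mem_Ioo_left (ht : t ∈ Ioo a m) : pool F a m b t = F a := by
  unfold pool; rw [if_neg (not_lt.2 ht.1.le), if_pos ht.2]

theorem pool_of_mem_Ioo_right (ham : a ≤ m) (ht : t ∈ Ioo m b) : pool F a m b t = F b := by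
  unfold pool; rw [if_neg (not_lt.2 (ham.trans ht.1.le)), if_neg (not_lt.2 ht.1.le), if_pos ht.2]

theorem Monotone.pool_le (hF : Monotone F) (ht : t < m) : pool F a m b t ≤ F t := by
  unfold pool; split_ifs <;> first | exact le_rfl | exact hF (by linarith)

theorem Monotone.le_pool (hF : Monotone F) (ht : m < t) : F t ≤ pool F a m b t := by
  unfold pool; split_ifs <;> first | exact le_rfl | exact hF (by linarith)

theorem Monotone.pool (hF : Monotone F) : Monotone (pool F a m b) := by
  intro s t hst
  unfold _root_.pool
  split_ifs <;> first | exact le_rfl | exact hF (by linarith)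

theorem Monotone.integral_pool (hF : Monotone F) (ham : a ≤ m) (hmb : m ≤ b) :
    ∫ t in a..b, _root_.pool F a m b t = (m - a) * F a + (b - m) * F b := by
  rw [← intervalIntegral.integral_add_adjacent_intervals (b := m) hF.pool.intervalIntegrable
      hF.pool.intervalIntegrable,
    intervalIntegral_eq_mul_of_forall_Ioo (f := _root_.pool F a m b) ham
      fun _ => pool_of_mem_Ioo_left,
    intervalIntegral_eq_mul_of_forall_Ioo (f := _root_.pool F a m b) hmb
      fun _ => pool_of_mem_Ioo_right ham]

end pool

/-- Pooling `(a, b]` rather than `[a, b]` makes `cdf_poolMeasure` hold whether or not `ρ` has an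
atom at `a`. -/
noncomputable def poolMeasure (ρ : Measure ℝ) (a m b : ℝ) : Measure ℝ :=
  ρ.restrict (Ioc a b)ᶜ + ρ (Ioc a b) • Measure.dirac m

section poolMeasure

variable (ρ : Measure ℝ) {a m b : ℝ}

theorem poolMeasure_apply {s : Set ℝ} (hs : MeasurableSet s) :
    poolMeasure ρ a m b s = ρ (s \ Ioc a b) + ρ (Ioc a b) * s.indicator 1 m := by
  simp [poolMeasure, Measure.restrict_apply hs, Measure.dirac_apply' m hs, sdiff_eq]

instance [IsProbabilityMeasure ρ] : IsProbabilityMeasure (poolMeasure ρ a m b) := by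
  constructor
  rw [poolMeasure_apply ρ MeasurableSet.univ, ← compl_eq_univ_sdiff, indicator_of_mem (mem_univ m),
    Pi.one_apply, mul_one, add_comm, measure_add_measure_compl measurableSet_Ioc, measure_univ]

theorem poolMeasure_compl_eq_zero {s : Set ℝ} (hs : MeasurableSet s) (hρs : ρ sᶜ = 0) (hm : m ∈ s) :
    poolMeasure ρ a m b sᶜ = 0 := by
  rw [poolMeasure_apply ρ hs.compl, indicator_of_notMem (notMem_compl_iff.2 hm), mul_zero, add_zero]
  exact measure_mono_null sdiff_subset hρs

theorem cdf_poolMeasure [IsProbabilityMeasure ρ] (ham : a ≤ m) (hmb : m ≤ b) :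
    cdf (poolMeasure ρ a m b) = pool (cdf ρ) a m b := by
  ext v
  simp only [cdf_eq_real, measureReal_def, pool, poolMeasure_apply ρ measurableSet_Iic]
  split_ifs with hva hvm hvb
  · rw [sdiff_eq_left.2 (Iic_disjoint_Ioc hva.le),
      indicator_of_notMem (notMem_Iic.2 (hva.trans_le ham)), mul_zero, add_zero]
  · rw [show Iic v \ Ioc a b = Iic a by ext x; grind,
      indicator_of_notMem (notMem_Iic.2 hvm), mul_zero, add_zero]
  · rw [show Iic v \ Ioc a b = Iic a by ext x; grind, indicator_of_mem (mem_Iic.2 (not_lt.1 hvm)),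
      Pi.one_apply, mul_one, ← measure_union (Iic_disjoint_Ioc le_rfl) measurableSet_Ioc,
      Iic_union_Ioc_eq_Iic (ham.trans hmb)]
  · rw [indicator_of_mem (mem_Iic.2 (hmb.trans (not_lt.1 hvb))), Pi.one_apply, mul_one,
      ← measure_sdiff_add_inter (Iic v) measurableSet_Ioc,
      inter_eq_right.2 (Ioc_subset_Iic_self.trans (Iic_subset_Iic.2 (not_lt.1 hvb)))]

end poolMeasure

theorem integral_cdf_eq_of_setIntegral_sub_eq_zero (ρ : Measure ℝ) [IsProbabilityMeasure ρ]
    {a m b : ℝ} (ham : a ≤ m) (hmb : m ≤ b) (ha : ρ {a} = 0)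
    (hmean : ∫ θ in Icc a b, (θ - m) ∂ρ = 0) :
    ∫ t in a..b, cdf ρ t = (m - a) * cdf ρ a + (b - m) * cdf ρ b := by
  have hab := ham.trans hmb
  have hIoc : ρ.real (Ioc a b) = cdf ρ b - cdf ρ a := by
    have h := (cdf ρ).measure_Ioc a b
    rw [measure_cdf] at h
    rw [measureReal_def, h, ENNReal.toReal_ofReal (sub_nonneg.2 ((cdf ρ).mono hab))]
  have hmoment : ∫ θ in Ioc a b, (θ - a) ∂ρ = (m - a) * (cdf ρ b - cdf ρ a) := by
    have hsplit : ∫ θ in Ioc a b, (θ - a) ∂ρ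
        = ∫ θ in Ioc a b, (θ - m) ∂ρ + ∫ θ in Ioc a b, (m - a) ∂ρ := by
      rw [← integral_add (Continuous.integrableOn_Ioc (by fun_prop)) (integrable_const (m - a))]
      simp_rw [sub_add_sub_cancel]
    rw [hsplit, ← integral_Icc_eq_integral_Ioc' ha, hmean, setIntegral_const, hIoc, smul_eq_mul,
      zero_add, mul_comm]
  have hparts := (cdf ρ).integral_sub_eq_integral_Ioc_sub hab
  rw [measure_cdf, hmoment, intervalIntegral.integral_sub intervalIntegrable_const
    (cdf ρ).mono.intervalIntegrable, intervalIntegral.integral_const, smul_eq_mul] at hparts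
  linear_combination -hparts

theorem stmt_12_general (M : ℝ)
    (ρ : Measure ℝ) [IsProbabilityMeasure ρ]
    (hρs : ρ (Set.Icc 0 M)ᶜ = 0)
    (H : ℝ → ℝ) (hH : ∀ v, H v = (ρ (Set.Iic v)).toReal)
    (hHc : Continuous H)
    (x1 μ x2 : ℝ) (h0 : 0 ≤ x1) (h1 : x1 ≤ μ) (h2 : μ ≤ x2) (h3 : x2 ≤ M)
    (hmean : (∫ θ in Set.Icc x1 x2, (θ - μ) ∂ρ) = 0)
    (Hhat : ℝ → ℝ)
    (hHhat : ∀ θ, Hhat θ = if θ < x1 then H θ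
      else if θ < μ then H x1
      else if θ < x2 then H x2
      else H θ) :
    (∃ ν : Measure ℝ, IsProbabilityMeasure ν ∧ ν (Set.Icc 0 M)ᶜ = 0 ∧
      ∀ v, Hhat v = (ν (Set.Iic v)).toReal) ∧
    (∀ v ∈ Set.Icc (0:ℝ) M, (∫ t in v..M, H t) ≤ ∫ t in v..M, Hhat t) ∧
    ((∫ t in (0:ℝ)..M, H t) = ∫ t in (0:ℝ)..M, Hhat t) := by
  obtain rfl : H = cdf ρ := funext fun v => by rw [hH, cdf_eq_real, measureReal_def]
  obtain rfl : Hhat = pool (cdf ρ) x1 μ x2 := funext hHhat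
  have hF := (cdf ρ).mono
  have hint : ∀ a b, IntervalIntegrable (fun t => pool (cdf ρ) x1 μ x2 t - cdf ρ t) volume a b :=
    fun a b => hF.pool.intervalIntegrable.sub hF.intervalIntegrable
  have hsub : ∀ v, ∫ t in v..M, (pool (cdf ρ) x1 μ x2 t - cdf ρ t)
      = (∫ t in v..M, pool (cdf ρ) x1 μ x2 t) - ∫ t in v..M, cdf ρ t :=
    fun v => intervalIntegral.integral_sub hF.pool.intervalIntegrable hF.intervalIntegrable
  have hzero : ∫ t in 0..M, (pool (cdf ρ) x1 μ x2 t - cdf ρ t) = 0 := by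
    rw [← intervalIntegral.integral_add_adjacent_intervals (hint 0 x1) (hint x1 M),
      ← intervalIntegral.integral_add_adjacent_intervals (hint x1 x2) (hint x2 M),
      intervalIntegral_eq_mul_of_forall_Ioo h0 (c := 0) fun t ht => sub_eq_zero.2 (pool_of_lt ht.2),
      intervalIntegral_eq_mul_of_forall_Ioo h3 (c := 0)
        fun t ht => sub_eq_zero.2 (pool_of_le h2 ht.1.le),
      intervalIntegral.integral_sub hF.pool.intervalIntegrable hF.intervalIntegrable,
      hF.integral_pool h1 h2, integral_cdf_eq_of_setIntegral_sub_eq_zero ρ h1 h2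
        (measure_singleton_eq_zero_of_continuousAt_cdf ρ hHc.continuousAt) hmean]
    ring
  refine ⟨⟨poolMeasure ρ x1 μ x2, inferInstance,
    poolMeasure_compl_eq_zero ρ measurableSet_Icc hρs ⟨h0.trans h1, h2.trans h3⟩,
    fun v => by rw [← cdf_poolMeasure ρ h1 h2, cdf_eq_real, measureReal_def]⟩, fun v hv => ?_, ?_⟩
  · have h := intervalIntegral_tail_nonneg_of_single_crossing (hint 0 M)
      (fun t ht => sub_nonpos.2 (hF.pool_le ht)) (fun t ht => sub_nonneg.2 (hF.le_pool ht)) hzero hv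
    rw [hsub] at h
    linarith
  · rw [hsub] at hzero
    linarith

/-- If `H` is a continuous CDF of a Borel probability measure `ρ`
on `[0,M]` and `x1 ≤ μ ≤ x2` satisfy `∫_{[x1,x2]} (θ−μ) dρ = 0`, then the
pooled function `Ĥ` (equal to `H` outside `[x1,x2]`, to `H(x1)` on `[x1,μ)` and
to `H(x2)` on `[μ,x2)`) is the CDF of a Borel probability measure on `[0,M]`,
and `H` is a mean-preserving spread of `Ĥ`. -/
theorem stmt_12 (M : ℝ) (hM : 0 < M)
    (ρ : Measure ℝ) [IsProbabilityMeasure ρ]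
    (hρs : ρ (Set.Icc 0 M)ᶜ = 0)
    (H : ℝ → ℝ) (hH : ∀ v, H v = (ρ (Set.Iic v)).toReal)
    (hHc : Continuous H)
    (x1 μ x2 : ℝ) (h0 : 0 ≤ x1) (h1 : x1 ≤ μ) (h2 : μ ≤ x2) (h3 : x2 ≤ M)
    (hmean : (∫ θ in Set.Icc x1 x2, (θ - μ) ∂ρ) = 0)
    (Hhat : ℝ → ℝ)
    (hHhat : ∀ θ, Hhat θ = if θ < x1 then H θ
      else if θ < μ then H x1
      else if θ < x2 then H x2
      else H θ) :
    (∃ ν : Measure ℝ, IsProbabilityMeasure ν ∧ ν (Set.Icc 0 M)ᶜ = 0 ∧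
      ∀ v, Hhat v = (ν (Set.Iic v)).toReal) ∧
    (∀ v ∈ Set.Icc (0:ℝ) M, (∫ t in v..M, H t) ≤ ∫ t in v..M, Hhat t) ∧
    ((∫ t in (0:ℝ)..M, H t) = ∫ t in (0:ℝ)..M, Hhat t) :=
  stmt_12_general M ρ hρs H hH hHc x1 μ x2 h0 h1 h2 h3 hmean Hhat hHhat
end

section
/- Let a ∈ [0, 1), b ∈ [0, 1], d > 0 and θ ∈ ℝ. Define D(λ) = (1 − λ·a − (1−λ)·b)/((1−λ)·d) for λ ∈ [0, 1). Then: (i) D is differentiable with D′(λ) = (1 − a)/((1−λ)²·d) > 0, so D is strictly increasing on [0,1); (ii) D(λ) → ∞ as λ → 1⁻; (iii) consequently q̂(λ) := max{0, θ − D(λ)} is nonincreasing in λ, and there exists λ̄ < 1 such that q̂(λ) = 0 for all λ ∈ [λ̄, 1). -/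
/-!
Since `1 - λa - (1-λ)b = (1-a) + (1-λ)(a-b)`, the distortion is
`D(λ) = ((1-a)/d) / (1-λ) + (a-b)/d` for `λ < 1`: a positive multiple of `1/(1-λ)` plus a
constant. Such a function has derivative `((1-a)/d)/(1-λ)²`, increases strictly on `(-∞, 1)` and
blows up at `1⁻`; `max 0 (θ - D)` therefore decreases and vanishes once `D ≥ θ`.
-/

open Filter Set Topology

theorem hasDerivAt_div_one_sub (c : ℝ) {x : ℝ} (hx : x ≠ 1) :
    HasDerivAt (fun y => c / (1 - y)) (c / (1 - x) ^ 2) x := by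
  have h := (hasDerivAt_const x c).fun_div ((hasDerivAt_id' x).const_sub 1)
    (sub_ne_zero.2 hx.symm)
  exact h.congr_deriv (by ring)

theorem strictMonoOn_div_one_sub {c : ℝ} (hc : 0 < c) :
    StrictMonoOn (fun y => c / (1 - y)) (Iio 1) := fun _ _ _ hy hxy =>
  div_lt_div_of_pos_left hc (sub_pos.2 hy) (sub_lt_sub_left hxy 1)

theorem tendsto_div_one_sub_nhdsLT_one {c : ℝ} (hc : 0 < c) :
    Tendsto (fun y => c / (1 - y)) (𝓝[<] 1) atTop := by
  have h : Tendsto (fun y : ℝ => 1 - y) (𝓝[<] 1) (𝓝[>] 0) := by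
    refine tendsto_nhdsWithin_of_tendsto_nhds_of_eventually_within _ ?_ ?_
    · have : Tendsto (fun y : ℝ => 1 - y) (𝓝 1) (𝓝 (1 - 1)) :=
        tendsto_const_nhds.sub tendsto_id
      simpa using this.mono_left nhdsWithin_le_nhds
    · filter_upwards [self_mem_nhdsWithin] with y (hy : y < 1) using sub_pos.2 hy
  simpa [div_eq_mul_inv] using h.inv_tendsto_nhdsGT_zero.const_mul_atTop hc

theorem exists_lt_forall_Ico_ge_of_tendsto_nhdsLT_atTop {f : ℝ → ℝ} {b : ℝ}
    (hf : Tendsto f (𝓝[<] b) atTop) (θ : ℝ) : ∃ l < b, ∀ x ∈ Ico l b, θ ≤ f x :=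
  mem_nhdsLT_iff_exists_Ico_subset.1 (hf.eventually_ge_atTop θ)

theorem distortion_eq_div_one_sub_add {a b d x : ℝ} (hd : d ≠ 0) (hx : x ≠ 1) :
    (1 - x * a - (1 - x) * b) / ((1 - x) * d) = (1 - a) / d / (1 - x) + (a - b) / d := by
  have : 1 - x ≠ 0 := sub_ne_zero.2 hx.symm
  field_simp
  ring

theorem stmt_13_general (a b d θ : ℝ)
    (ha : a ∈ Set.Ico (0:ℝ) 1) (hd : 0 < d)
    (D : ℝ → ℝ)
    (hD : ∀ lam, D lam = (1 - lam * a - (1 - lam) * b) / ((1 - lam) * d)) :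
    (∀ lam ∈ Set.Ico (0:ℝ) 1,
      HasDerivAt D ((1 - a) / ((1 - lam) ^ 2 * d)) lam) ∧
    (∀ lam ∈ Set.Ico (0:ℝ) 1, 0 < (1 - a) / ((1 - lam) ^ 2 * d)) ∧
    StrictMonoOn D (Set.Ico (0:ℝ) 1) ∧
    Filter.Tendsto D (nhdsWithin 1 (Set.Iio 1)) Filter.atTop ∧
    AntitoneOn (fun lam => max 0 (θ - D lam)) (Set.Ico (0:ℝ) 1) ∧
    (∃ lb, lb < 1 ∧ ∀ lam, lb ≤ lam → lam < 1 → max 0 (θ - D lam) = 0) := by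
  have hc : 0 < (1 - a) / d := div_pos (sub_pos.2 ha.2) hd
  have hEq : EqOn (fun x => (1 - a) / d / (1 - x) + (a - b) / d) D (Iio 1) := fun x hx =>
    ((hD x).trans (distortion_eq_div_one_sub_add hd.ne' hx.ne)).symm
  have hmono : StrictMonoOn D (Iio 1) :=
    ((strictMonoOn_div_one_sub hc).add_const _).congr hEq
  have htend : Tendsto D (𝓝[<] 1) atTop :=
    (tendsto_atTop_add_const_right _ _ (tendsto_div_one_sub_nhdsLT_one hc)).congr'
      (eventuallyEq_nhdsWithin_of_eqOn hEq)
  obtain ⟨lb, hlb, hge⟩ := exists_lt_forall_Ico_ge_of_tendsto_nhdsLT_atTop htend θ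
  refine ⟨fun x hx => ?_, fun x hx => ?_, hmono.mono fun x hx => hx.2, htend,
    fun x hx y hy hxy => ?_, lb, hlb, fun x hlbx hx => max_eq_left ?_⟩
  · have hderiv := (hasDerivAt_div_one_sub ((1 - a) / d) hx.2.ne).add_const ((a - b) / d)
    rw [mul_comm, ← div_div]
    exact hderiv.congr_of_eventuallyEq (eventuallyEq_of_mem (Iio_mem_nhds hx.2) hEq.symm)
  · have : 0 < 1 - x := sub_pos.2 hx.2
    have : 0 < 1 - a := sub_pos.2 ha.2
    positivity
  · exact max_le_max le_rfl (sub_le_sub_left (hmono.monotoneOn hx.2 hy.2 hxy) θ)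
  · exact sub_nonpos.2 (hge x ⟨hlbx, hx⟩)

/-- For `a ∈ [0,1)`, `b ∈ [0,1]`, `d > 0`, the distortion
`D(λ) = (1 − λa − (1−λ)b)/((1−λ)d)` has derivative `(1−a)/((1−λ)²d) > 0` on
`[0,1)`, is strictly increasing there, tends to `+∞` as `λ → 1⁻`, and hence
`q̂(λ) = max{0, θ − D(λ)}` is nonincreasing in `λ` and vanishes for all `λ`
beyond some threshold `λ̄ < 1`. -/
theorem stmt_13 (a b d θ : ℝ)
    (ha : a ∈ Set.Ico (0:ℝ) 1) (hb : b ∈ Set.Icc (0:ℝ) 1) (hd : 0 < d)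
    (D : ℝ → ℝ)
    (hD : ∀ lam, D lam = (1 - lam * a - (1 - lam) * b) / ((1 - lam) * d)) :
    (∀ lam ∈ Set.Ico (0:ℝ) 1,
      HasDerivAt D ((1 - a) / ((1 - lam) ^ 2 * d)) lam) ∧
    (∀ lam ∈ Set.Ico (0:ℝ) 1, 0 < (1 - a) / ((1 - lam) ^ 2 * d)) ∧
    StrictMonoOn D (Set.Ico (0:ℝ) 1) ∧
    Filter.Tendsto D (nhdsWithin 1 (Set.Iio 1)) Filter.atTop ∧
    AntitoneOn (fun lam => max 0 (θ - D lam)) (Set.Ico (0:ℝ) 1) ∧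
    (∃ lb, lb < 1 ∧ ∀ lam, lb ≤ lam → lam < 1 → max 0 (θ - D lam) = 0) :=
  stmt_13_general a b d θ ha hd D hD
end

section
/- Let a ∈ [0, 1], b ∈ (0, 1), c > 0 and λ ∈ [0, 1), and for natural numbers J ≥ 1 define D(J) = (1 − λ·a^J − (1−λ)·b^J)/((1−λ)·J·b^{J−1}·c). Then: (i) D(J) → ∞ as J → ∞; (ii) for every J > b/(1−b), D(J+1) ≥ D(J); (iii) consequently, for any θ ∈ ℝ, the sequence q̂_J := max{0, θ − D(J)} is nonincreasing in J for all J > b/(1−b), and there exists Ĵ such that q̂_J = 0 for all J ≥ Ĵ. -/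
open Filter Topology

/-- For `a ∈ [0,1]`, `b ∈ (0,1)`, `c > 0`, `λ ∈ [0,1)`, the
distortion `D(J) = (1 − λa^J − (1−λ)b^J)/((1−λ)·J·b^{J−1}·c)` tends to `+∞` as
`J → ∞`, satisfies `D(J+1) ≥ D(J)` whenever `J > b/(1−b)`, and hence for any
`θ` the quality `q̂_J = max{0, θ − D(J)}` is nonincreasing in `J` beyond
`b/(1−b)` and eventually equals zero. -/
theorem stmt_14 (a b c lam : ℝ)
    (ha : a ∈ Set.Icc (0:ℝ) 1) (hb : b ∈ Set.Ioo (0:ℝ) 1) (hc : 0 < c)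
    (hlam : lam ∈ Set.Ico (0:ℝ) 1)
    (D : ℕ → ℝ)
    (hD : ∀ J : ℕ, 1 ≤ J →
      D J = (1 - lam * a ^ J - (1 - lam) * b ^ J) /
        ((1 - lam) * (J : ℝ) * b ^ (J - 1) * c)) :
    Filter.Tendsto D Filter.atTop Filter.atTop ∧
    (∀ J : ℕ, 1 ≤ J → b / (1 - b) < (J : ℝ) → D J ≤ D (J + 1)) ∧
    (∀ θ : ℝ,
      (∀ J : ℕ, 1 ≤ J → b / (1 - b) < (J : ℝ) →
        max 0 (θ - D (J + 1)) ≤ max 0 (θ - D J)) ∧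
      (∃ Jhat : ℕ, 1 ≤ Jhat ∧ ∀ J, Jhat ≤ J → max 0 (θ - D J) = 0)) := by
  obtain ⟨ha0, ha1⟩ := ha
  obtain ⟨hb0, hb1⟩ := hb
  obtain ⟨hl0, hl1⟩ := hlam
  have hL : (0:ℝ) < 1 - lam := by linarith
  set g : ℕ → ℝ := fun J => (J : ℝ) * b ^ (J - 1) with hg_def
  have hgpos : ∀ J : ℕ, 1 ≤ J → 0 < g J := by
    intro J hJ
    have : (0:ℝ) < (J:ℝ) := by exact_mod_cast hJ
    positivity
  have hg0 : Tendsto g atTop (𝓝 0) := by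
    rw [← tendsto_add_atTop_iff_nat 1]
    have h1 : Tendsto (fun n : ℕ => (n : ℝ) * b ^ n) atTop (𝓝 0) :=
      tendsto_self_mul_const_pow_of_lt_one hb0.le hb1
    have h2 : Tendsto (fun n : ℕ => b ^ n) atTop (𝓝 0) :=
      tendsto_pow_atTop_nhds_zero_of_lt_one hb0.le hb1
    have := h1.add h2
    rw [add_zero] at this
    convert this using 2 with n
    simp [hg_def]
    push_cast
    ring
  have hgIoi : Tendsto g atTop (𝓝[>] 0) := by
    refine tendsto_nhdsWithin_of_tendsto_nhds_of_eventually_within _ hg0 ?_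
    filter_upwards [eventually_ge_atTop 1] with J hJ
    exact hgpos J hJ
  have hginv : Tendsto (fun J => ((1 - b) / c) * (g J)⁻¹) atTop atTop :=
    (hgIoi.inv_tendsto_nhdsGT_zero).const_mul_atTop (div_pos (by linarith) hc)
  have hlow : ∀ J : ℕ, 1 ≤ J → ((1 - b) / c) * (g J)⁻¹ ≤ D J := by
    intro J hJ
    rw [hD J hJ]
    have hJR : (0:ℝ) < (J:ℝ) := by exact_mod_cast hJ
    have hp : (0:ℝ) < b ^ (J - 1) := by positivity
    have hden : (0:ℝ) < (1 - lam) * (J : ℝ) * b ^ (J - 1) * c := by positivity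
    have haJ : a ^ J ≤ 1 := pow_le_one₀ ha0 ha1
    have hbJ : b ^ J ≤ b := by
      calc b ^ J ≤ b ^ 1 := pow_le_pow_of_le_one hb0.le hb1.le hJ
        _ = b := pow_one b
    have hnum : (1 - lam) * (1 - b) ≤ 1 - lam * a ^ J - (1 - lam) * b ^ J := by
      nlinarith [mul_le_mul_of_nonneg_left hbJ hL.le]
    have heq : ((1 - b) / c) * (g J)⁻¹
        = ((1 - lam) * (1 - b)) / ((1 - lam) * (J : ℝ) * b ^ (J - 1) * c) := by
      simp only [hg_def]
      field_simp
    rw [heq]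
    gcongr
  have htend : Tendsto D atTop atTop := by
    refine tendsto_atTop_mono' _ ?_ hginv
    filter_upwards [eventually_ge_atTop 1] with J hJ
    exact hlow J hJ
  have hmono : ∀ J : ℕ, 1 ≤ J → b / (1 - b) < (J : ℝ) → D J ≤ D (J + 1) := by
    intro J hJ hJb
    obtain ⟨K, rfl⟩ : ∃ K, J = K + 1 := ⟨J - 1, (Nat.succ_pred_eq_of_pos hJ).symm⟩
    have hK0 : (0:ℝ) ≤ (K:ℝ) := Nat.cast_nonneg K
    have hn : ((K:ℝ) + 1) * (1 - b) > b := by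
      rw [div_lt_iff₀ (by linarith)] at hJb
      push_cast at hJb
      linarith
    rw [hD _ hJ, hD _ (by omega)]
    have hcast1 : ((K + 1 : ℕ) : ℝ) = (K : ℝ) + 1 := by push_cast; ring
    have hcast2 : ((K + 1 + 1 : ℕ) : ℝ) = (K : ℝ) + 2 := by push_cast; ring
    simp only [Nat.add_sub_cancel, hcast1, hcast2]
    have hp : (0:ℝ) < b ^ K := by positivity
    rw [div_le_div_iff₀ (by positivity) (by positivity)]
    have haJ : a ^ (K+1) ≤ 1 := pow_le_one₀ ha0 ha1
    have haJ0 : 0 ≤ a ^ (K+1) := by positivity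
    have hbb : (0:ℝ) < b ^ (K+1) := by positivity
    have hd : ((K:ℝ)+2) * b < (K:ℝ)+1 := by nlinarith
    have h2 : a ^ (K+1) * (((K:ℝ)+1) * a - ((K:ℝ)+2) * b) ≤ ((K:ℝ)+1) - ((K:ℝ)+2) * b := by
      rcases le_or_gt (((K:ℝ)+1) * a - ((K:ℝ)+2) * b) 0 with h | h
      · nlinarith
      · nlinarith [mul_le_mul_of_nonneg_right haJ h.le]
    have hkey : (1 - lam * a ^ (K+1) - (1-lam) * b ^ (K+1)) * ((((K:ℝ)+2)) * b)
        ≤ (1 - lam * a ^ (K+1+1) - (1-lam) * b ^ (K+1+1)) * ((K:ℝ)+1) := by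
      have e1 : lam * (a ^ (K+1) * (((K:ℝ)+1) * a - ((K:ℝ)+2) * b))
          ≤ lam * (((K:ℝ)+1) - ((K:ℝ)+2) * b) := mul_le_mul_of_nonneg_left h2 hl0
      have hpows : a ^ (K+1+1) = a ^ (K+1) * a := by ring
      have hpowb : b ^ (K+1+1) = b ^ (K+1) * b := by ring
      rw [hpows, hpowb]
      nlinarith [mul_nonneg (mul_nonneg hL.le hbb.le) hb0.le,
        mul_nonneg hL.le (by linarith : (0:ℝ) ≤ ((K:ℝ)+1) - ((K:ℝ)+2) * b)]
    have hfin := mul_le_mul_of_nonneg_right hkey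
      (by positivity : (0:ℝ) ≤ (1-lam) * b ^ K * c)
    have hbp : b ^ (K+1) = b ^ K * b := by ring
    rw [hbp] at hfin ⊢
    linarith [hfin]
  refine ⟨htend, hmono, fun θ => ⟨?_, ?_⟩⟩
  · intro J hJ hJb
    exact max_le_max le_rfl (by linarith [hmono J hJ hJb])
  · obtain ⟨N, hN⟩ := (htend.eventually_ge_atTop θ).exists_forall_of_atTop
    refine ⟨max N 1, le_max_right _ _, fun J hJ => ?_⟩
    have : θ ≤ D J := hN J (le_trans (le_max_left _ _) hJ)
    exact max_eq_left (by linarith)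
end
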